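/- arXiv:2008.08109 — 4 statements merged into one kernel-verified Lean document; each statement's English description precedes it below -/
import Mathlib

section
/- Let W : [0,1]×[0,1] → [0,1] be a measurable symmetric graphon kernel, S a finite state set, and Q a rate matrix function. Suppose u : [0,∞)×[0,1] → ℝ^S is such that u(t,·) is continuous for every t ≥ 0, t ↦ u(t,x) is differentiable for every x, and ∂_t u(t,x) = Q((𝕎 u(t,·))(x)) u(t,x) for all t ≥ 0 and x ∈ [0,1]. If u(0,x) ∈ Δ for all x ∈ [0,1], then u(t,x) ∈ Δ for all t ≥ 0 and all x ∈ [0,1]. -/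
open MeasureTheory Set

/-- The graphon integral operator applied componentwise to a vector-valued function. -/
noncomputable def graphonOpV {S : Type} [Fintype S] (W : ℝ → ℝ → ℝ)
    (f : ℝ → S → ℝ) (x : ℝ) : S → ℝ :=
  fun s => ∫ y in Icc (0:ℝ) 1, W x y * f y s

/-- The ℓ¹ norm on ℝ^S. -/
noncomputable def l1Norm {S : Type} [Fintype S] (v : S → ℝ) : ℝ := ∑ s, |v s|

/-- The operator norm on S×S matrices induced by the ℓ¹ norm. -/
noncomputable def matL1Norm {S : Type} [Fintype S] (A : Matrix S S ℝ) : ℝ :=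
  sSup { r | ∃ v : S → ℝ, l1Norm v = 1 ∧ r = l1Norm (A.mulVec v) }

/-- The probability simplex Δ in ℝ^S. -/
def probSimplex (S : Type) [Fintype S] : Set (S → ℝ) :=
  {v | (∀ s, 0 ≤ v s) ∧ ∑ s, v s = 1}

/-- A rate matrix function with Lipschitz constant `L`. -/
def IsRateMatrixFun {S : Type} [Fintype S] (Q : (S → ℝ) → Matrix S S ℝ) (L : ℝ) : Prop :=
  (∀ φ : S → ℝ, ∀ s s' : S, s ≠ s' → 0 ≤ Q φ s s') ∧
  (∀ φ : S → ℝ, ∀ s' : S, ∑ s, Q φ s s' = 0) ∧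
  (∀ φ ψ : S → ℝ, matL1Norm (Q φ - Q ψ) ≤ L * l1Norm (fun s => φ s - ψ s))

/-!
Fix `x` and write `v t = u t x`, so that `v' = A t *ᵥ v` with `A t = Q (𝕎 (u t) x)` a rate
matrix. Zero column sums make `∑ s, v t s` constant. For small `h ≥ 0` the Euler step
`1 + h • A t` is column-stochastic, hence an `ℓ¹` contraction, so `t ↦ ‖v t‖₁` has nonpositive
right Dini derivative and is nonincreasing. Finally, a vector with `∑ s, v s = 1` and
`∑ s, |v s| ≤ 1` has nonnegative entries.
-/

open Filter Topology Asymptotics Matrix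

structure IsRateMatrix {S : Type} [Fintype S] (A : Matrix S S ℝ) : Prop where
  offDiag_nonneg : ∀ s s', s ≠ s' → 0 ≤ A s s'
  sum_col : ∀ s', ∑ s, A s s' = 0

lemma IsRateMatrixFun.isRateMatrix {S : Type} [Fintype S] {Q : (S → ℝ) → Matrix S S ℝ} {L : ℝ}
    (hQ : IsRateMatrixFun Q L) (φ : S → ℝ) : IsRateMatrix (Q φ) :=
  ⟨hQ.1 φ, hQ.2.1 φ⟩

section l1Norm

variable {S : Type} [Fintype S]

lemma l1Norm_nonneg (v : S → ℝ) : 0 ≤ l1Norm v :=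
  Finset.sum_nonneg fun s _ => abs_nonneg (v s)

lemma continuous_l1Norm : Continuous (l1Norm : (S → ℝ) → ℝ) := by
  unfold l1Norm
  fun_prop

lemma l1Norm_add_le (v w : S → ℝ) : l1Norm (v + w) ≤ l1Norm v + l1Norm w := by
  unfold l1Norm
  rw [← Finset.sum_add_distrib]
  exact Finset.sum_le_sum fun s _ => abs_add_le (v s) (w s)

lemma l1Norm_le_card_mul_norm (v : S → ℝ) : l1Norm v ≤ Fintype.card S * ‖v‖ := by
  calc l1Norm v ≤ ∑ _s : S, ‖v‖ := Finset.sum_le_sum fun s _ => norm_le_pi_norm v s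
    _ = Fintype.card S * ‖v‖ := by simp

lemma l1Norm_eq_sum_of_nonneg {v : S → ℝ} (hv : ∀ s, 0 ≤ v s) : l1Norm v = ∑ s, v s :=
  Finset.sum_congr rfl fun s _ => abs_of_nonneg (hv s)

lemma nonneg_of_l1Norm_le_sum {v : S → ℝ} (hv : l1Norm v ≤ ∑ s, v s) (s : S) : 0 ≤ v s := by
  have hgap : ∑ s, (|v s| - v s) = 0 :=
    le_antisymm (by rwa [Finset.sum_sub_distrib, sub_nonpos])
      (Finset.sum_nonneg fun s _ => sub_nonneg.2 (le_abs_self (v s)))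
  have hs := (Finset.sum_eq_zero_iff_of_nonneg
    fun s _ => sub_nonneg.2 (le_abs_self (v s))).1 hgap s (Finset.mem_univ s)
  rw [sub_eq_zero] at hs
  exact hs ▸ abs_nonneg (v s)

lemma l1Norm_mulVec_le_of_mem_colStochastic [DecidableEq S] {M : Matrix S S ℝ}
    (hM : M ∈ colStochastic ℝ S) (v : S → ℝ) : l1Norm (M *ᵥ v) ≤ l1Norm v := by
  have habs : ∀ s, |(M *ᵥ v) s| ≤ (M *ᵥ fun s => |v s|) s := fun s => by
    refine (Finset.abs_sum_le_sum_abs _ _).trans_eq (Finset.sum_congr rfl fun s' _ => ?_)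
    rw [abs_mul, abs_of_nonneg (nonneg_of_mem_colStochastic hM)]
  calc l1Norm (M *ᵥ v) ≤ ∑ s, (M *ᵥ fun s => |v s|) s := Finset.sum_le_sum fun s _ => habs s
    _ = l1Norm v := sum_mulVec_of_mem_colStochastic hM

end l1Norm

namespace IsRateMatrix

variable {S : Type} [Fintype S] {A : Matrix S S ℝ}

lemma sum_mulVec_eq_zero (hA : IsRateMatrix A) (v : S → ℝ) : ∑ s, (A *ᵥ v) s = 0 := by
  simp only [mulVec, dotProduct]
  rw [Finset.sum_comm]
  simp [← Finset.sum_mul, hA.sum_col]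

lemma one_add_smul_mem_colStochastic [DecidableEq S] (hA : IsRateMatrix A) {h : ℝ}
    (hh : 0 ≤ h) (hdiag : ∀ s, 0 ≤ 1 + h * A s s) : 1 + h • A ∈ colStochastic ℝ S := by
  refine mem_colStochastic_iff_sum.2 ⟨fun s s' => ?_, fun s' => ?_⟩
  · by_cases hss : s = s'
    · subst hss
      simpa using hdiag s
    · simpa [one_apply_ne hss] using mul_nonneg hh (hA.offDiag_nonneg s s' hss)
  · simp [Finset.sum_add_distrib, one_apply, ← Finset.mul_sum, hA.sum_col]

lemma eventually_l1Norm_add_smul_mulVec_le (hA : IsRateMatrix A) (v : S → ℝ) :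
    ∀ᶠ h in 𝓝 (0 : ℝ), 0 ≤ h → l1Norm (v + h • A *ᵥ v) ≤ l1Norm v := by
  classical
  have hdiag : ∀ᶠ h in 𝓝 (0 : ℝ), ∀ s, 0 < 1 + h * A s s :=
    eventually_all.2 fun s => Tendsto.eventually_const_lt one_pos <|
      (continuous_const.add (continuous_id.mul continuous_const)).tendsto' _ _ (by simp)
  filter_upwards [hdiag] with h hdiag hh
  have hstep : v + h • A *ᵥ v = (1 + h • A) *ᵥ v := by
    rw [add_mulVec, one_mulVec, smul_mulVec]
  rw [hstep]
  exact l1Norm_mulVec_le_of_mem_colStochastic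
    (hA.one_add_smul_mem_colStochastic hh fun s => (hdiag s).le) v

end IsRateMatrix

/-- `hstep` says that the right upper Dini derivative of `g` is nowhere positive. -/
lemma le_of_forall_eventually_le_add_isLittleO {g : ℝ → ℝ} {a b : ℝ} (hab : a ≤ b)
    (hg : ContinuousOn g (Icc a b))
    (hstep : ∀ τ ∈ Ico a b, ∃ ρ : ℝ → ℝ, ρ =o[𝓝[>] τ] (fun z => z - τ) ∧
      ∀ᶠ z in 𝓝[>] τ, g z ≤ g τ + ρ z) :
    g b ≤ g a := by
  refine image_le_of_liminf_slope_right_le_deriv_boundary hg le_rfl continuousOn_const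
    (fun _ _ => hasDerivWithinAt_const _ _ _) (B := fun _ => g a) (B' := fun _ => 0) ?_
    ⟨hab, le_rfl⟩
  intro τ hτ r hr
  obtain ⟨ρ, hρ, hle⟩ := hstep τ hτ
  have hsmall : ∀ᶠ z in 𝓝[>] τ, ρ z / (z - τ) < r := hρ.tendsto_div_nhds_zero (Iio_mem_nhds hr)
  refine Eventually.frequently ?_
  filter_upwards [hle, hsmall, self_mem_nhdsWithin] with z hle hsmall hz
  rw [slope_def_field]
  exact lt_of_le_of_lt (div_le_div_of_nonneg_right (by linarith) (sub_pos.2 hz).le) hsmall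

section RateEquation

variable {S : Type} [Fintype S] {v : ℝ → S → ℝ} {A : ℝ → Matrix S S ℝ} {a b : ℝ}

lemma sum_eq_of_hasDerivAt_rateMatrix (hab : a ≤ b) (hA : ∀ τ, IsRateMatrix (A τ))
    (hv : ∀ τ ∈ Icc a b, HasDerivAt v (A τ *ᵥ v τ) τ) : ∑ s, v b s = ∑ s, v a s := by
  have hsum : ∀ τ ∈ Icc a b, HasDerivAt (fun τ => ∑ s, v τ s) 0 τ := fun τ hτ => by
    simpa only [(hA τ).sum_mulVec_eq_zero] using
      HasDerivAt.fun_sum (u := Finset.univ) fun s _ => hasDerivAt_pi.1 (hv τ hτ) s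
  exact constant_of_has_deriv_right_zero
    (fun τ hτ => (hsum τ hτ).continuousAt.continuousWithinAt)
    (fun τ hτ => (hsum τ (Ico_subset_Icc_self hτ)).hasDerivWithinAt) b ⟨hab, le_rfl⟩

lemma l1Norm_le_of_hasDerivAt_rateMatrix (hab : a ≤ b) (hA : ∀ τ, IsRateMatrix (A τ))
    (hv : ∀ τ ∈ Icc a b, HasDerivAt v (A τ *ᵥ v τ) τ) : l1Norm (v b) ≤ l1Norm (v a) := by
  refine le_of_forall_eventually_le_add_isLittleO (g := fun τ => l1Norm (v τ)) hab
    (fun τ hτ => (continuous_l1Norm.continuousAt.comp (hv τ hτ).continuousAt).continuousWithinAt)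
    fun τ hτ => ?_
  set w := A τ *ᵥ v τ
  set r : ℝ → S → ℝ := fun z => v z - v τ - (z - τ) • w
  have hr : r =o[𝓝[>] τ] (fun z => z - τ) :=
    (hasDerivAt_iff_isLittleO.1 (hv τ (Ico_subset_Icc_self hτ))).mono nhdsWithin_le_nhds
  have hl1r : (fun z => l1Norm (r z)) =O[𝓝[>] τ] r :=
    IsBigO.of_bound (Fintype.card S) (Eventually.of_forall fun z => by
      rw [Real.norm_of_nonneg (l1Norm_nonneg _)]
      exact l1Norm_le_card_mul_norm _)
  refine ⟨fun z => l1Norm (r z), hl1r.trans_isLittleO hr, ?_⟩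
  have hstep : ∀ᶠ z in 𝓝[>] τ, 0 ≤ z - τ → l1Norm (v τ + (z - τ) • w) ≤ l1Norm (v τ) :=
    (((continuous_sub_right τ).tendsto' τ 0 (sub_self τ)).eventually
      ((hA τ).eventually_l1Norm_add_smul_mulVec_le (v τ))).filter_mono nhdsWithin_le_nhds
  filter_upwards [hstep, self_mem_nhdsWithin] with z hstep hz
  calc l1Norm (v z) = l1Norm ((v τ + (z - τ) • w) + r z) := by
        congr 1
        simp only [r]
        abel
    _ ≤ l1Norm (v τ + (z - τ) • w) + l1Norm (r z) := l1Norm_add_le _ _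
    _ ≤ l1Norm (v τ) + l1Norm (r z) := by
        gcongr
        exact hstep (sub_nonneg.2 hz.le)

end RateEquation

theorem stmt1_general {S : Type} [Fintype S] (W : ℝ → ℝ → ℝ) (L_Q : ℝ)
    (Q : (S → ℝ) → Matrix S S ℝ)
    (hQ : IsRateMatrixFun Q L_Q)
    (u : ℝ → ℝ → S → ℝ)
    (hueq : ∀ t : ℝ, 0 ≤ t → ∀ x ∈ Icc (0:ℝ) 1,
      HasDerivAt (fun τ => u τ x) ((Q (graphonOpV W (u t) x)).mulVec (u t x)) t)
    (hu0 : ∀ x ∈ Icc (0:ℝ) 1, u 0 x ∈ probSimplex S) :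
    ∀ t : ℝ, 0 ≤ t → ∀ x ∈ Icc (0:ℝ) 1, u t x ∈ probSimplex S := by
  intro t ht x hx
  have hA : ∀ τ, IsRateMatrix (Q (graphonOpV W (u τ) x)) := fun τ => hQ.isRateMatrix _
  have hv : ∀ τ ∈ Icc 0 t,
      HasDerivAt (fun τ => u τ x) (Q (graphonOpV W (u τ) x) *ᵥ u τ x) τ :=
    fun τ hτ => hueq τ hτ.1 x hx
  obtain ⟨h0nonneg, h0sum⟩ := hu0 x hx
  have hsum : ∑ s, u t x s = 1 := (sum_eq_of_hasDerivAt_rateMatrix ht hA hv).trans h0sum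
  have hnorm : l1Norm (u t x) ≤ ∑ s, u t x s :=
    calc l1Norm (u t x) ≤ l1Norm (u 0 x) := l1Norm_le_of_hasDerivAt_rateMatrix ht hA hv
      _ = ∑ s, u t x s := by rw [l1Norm_eq_sum_of_nonneg h0nonneg, h0sum, hsum]
  exact ⟨nonneg_of_l1Norm_le_sum hnorm, hsum⟩

/-- for a measurable symmetric graphon kernel and a rate matrix function,
any solution of the graphon mean-field equation starting in the simplex Δ stays in Δ. -/
theorem stmt1 {S : Type} [Fintype S] (W : ℝ → ℝ → ℝ) (L_Q : ℝ)
    (Q : (S → ℝ) → Matrix S S ℝ)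
    (hWmeas : Measurable (fun p : ℝ × ℝ => W p.1 p.2))
    (hWsymm : ∀ x ∈ Icc (0:ℝ) 1, ∀ y ∈ Icc (0:ℝ) 1, W x y = W y x)
    (hW01 : ∀ x ∈ Icc (0:ℝ) 1, ∀ y ∈ Icc (0:ℝ) 1, W x y ∈ Icc (0:ℝ) 1)
    (hQ : IsRateMatrixFun Q L_Q)
    (u : ℝ → ℝ → S → ℝ)
    (hucont : ∀ t : ℝ, 0 ≤ t → ContinuousOn (u t) (Icc (0:ℝ) 1))
    (hudiff : ∀ x ∈ Icc (0:ℝ) 1, ∀ t : ℝ, 0 ≤ t → DifferentiableAt ℝ (fun τ => u τ x) t)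
    (hueq : ∀ t : ℝ, 0 ≤ t → ∀ x ∈ Icc (0:ℝ) 1,
      HasDerivAt (fun τ => u τ x) ((Q (graphonOpV W (u t) x)).mulVec (u t x)) t)
    (hu0 : ∀ x ∈ Icc (0:ℝ) 1, u 0 x ∈ probSimplex S) :
    ∀ t : ℝ, 0 ≤ t → ∀ x ∈ Icc (0:ℝ) 1, u t x ∈ probSimplex S :=
  stmt1_general W L_Q Q hQ u hueq hu0
end

section
/- Let S be a finite set and let A : [0,∞) → ℝ^{S×S} be a continuous matrix-valued function such that for every t ≥ 0 the off-diagonal entries satisfy A(t)_{ss'} ≥ 0 for all s ≠ s' and every column sums to zero, ∑_{s∈S} A(t)_{ss'} = 0 for all s'. If p : [0,∞) → ℝ^S is differentiable with p'(t) = A(t) p(t) for all t ≥ 0 and p(0) ∈ Δ, then p(t) ∈ Δ for all t ≥ 0. -/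
/-!
The total negative mass `N t = ∑ s, (p t s)⁻` never increases. At a state `s` with `p t s ≤ 0`
the off-diagonal inflow can only raise `p t s`, so the right derivative of `(p t s)⁻` is at most
`(A t *ᵥ (p t)⁻) s`; summed over these states this is `≤ 0`, because each column of `A t` sums
to zero and its entries outside the diagonal are nonnegative. Since `N 0 = 0`, `p t ≥ 0`.
Conservation of `∑ s, p t s` is the identity `1ᵀ A = 0`.
-/

open MeasureTheory Set

open Filter Topology Matrix Finset

/-- The right derivative of `y ↦ (g y)⁻` at `x`, in terms of `g x` and `g' x`. -/
noncomputable def negPartDerivRight (x x' : ℝ) : ℝ :=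
  if x < 0 then -x' else if x = 0 then x'⁻ else 0

theorem HasDerivAt.hasDerivWithinAt_Ici_negPart {g : ℝ → ℝ} {g' x : ℝ} (hg : HasDerivAt g g' x) :
    HasDerivWithinAt (fun y => (g y)⁻) (negPartDerivRight (g x) g') (Ici x) x := by
  rcases lt_trichotomy (g x) 0 with hneg | hzero | hpos
  · have hev : (fun y => (g y)⁻) =ᶠ[𝓝 x] fun y => -g y := by
      filter_upwards [hg.continuousAt.eventually_lt continuousAt_const hneg] with y hy
      exact negPart_eq_neg.mpr hy.le
    simpa [negPartDerivRight, hneg] using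
      (hg.neg.congr_of_eventuallyEq hev).hasDerivWithinAt (s := Ici x)
  · rw [negPartDerivRight, if_neg hzero.not_lt, if_pos hzero, hasDerivWithinAt_iff_isLittleO]
    refine Asymptotics.IsBigO.trans_isLittleO (Asymptotics.IsBigO.of_bound 1 ?_)
      ((hasDerivAt_iff_isLittleO.mp hg).mono nhdsWithin_le_nhds)
    -- `(·)⁻` is 1-Lipschitz and positively homogeneous, so the error is at most that of `g`.
    filter_upwards [self_mem_nhdsWithin] with y (hy : x ≤ y)
    have hscale : (y - x) • g'⁻ = ((y - x) • g')⁻ := by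
      simp only [smul_eq_mul, negPart_def, ← mul_neg]
      rw [mul_max_of_nonneg _ _ (sub_nonneg.mpr hy), mul_zero]
    rw [hscale, hzero, one_mul, Real.norm_eq_abs, Real.norm_eq_abs, negPart_zero, sub_zero,
      sub_zero, negPart_def, negPart_def, abs_sub_comm (g y)]
    simpa only [sub_neg_eq_add, neg_add_eq_sub] using
      abs_sup_sub_sup_le_abs (-g y) (-((y - x) • g')) 0
  · have hev : (fun y => (g y)⁻) =ᶠ[𝓝 x] fun _ => 0 := by
      filter_upwards [continuousAt_const.eventually_lt hg.continuousAt hpos] with y hy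
      exact negPart_eq_zero.mpr hy.le
    simpa [negPartDerivRight, not_lt.mpr hpos.le, hpos.ne'] using
      ((hasDerivAt_const x (0 : ℝ)).congr_of_eventuallyEq hev).hasDerivWithinAt (s := Ici x)

section RateMatrix

variable {S : Type*} [Fintype S] {A : Matrix S S ℝ}

theorem Matrix.sum_mulVec_eq_zero (hA : ∀ s', ∑ s, A s s' = 0) (v : S → ℝ) :
    ∑ s, (A *ᵥ v) s = 0 := by
  simp [mulVec, dotProduct, sum_comm (γ := S), ← sum_mul, hA]

theorem Matrix.mulVec_apply_nonneg_of_apply_eq_zero (hA : ∀ s s', s ≠ s' → 0 ≤ A s s')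
    {w : S → ℝ} (hw : 0 ≤ w) {s : S} (hs : w s = 0) : 0 ≤ (A *ᵥ w) s :=
  sum_nonneg fun s' _ => by
    rcases eq_or_ne s s' with rfl | hne
    · simp [hs]
    · exact mul_nonneg (hA s s' hne) (hw s')

theorem Matrix.neg_mulVec_apply_le_mulVec_negPart (hA : ∀ s s', s ≠ s' → 0 ≤ A s s')
    {v : S → ℝ} {s : S} (hs : v s ≤ 0) : -(A *ᵥ v) s ≤ (A *ᵥ v⁻) s := by
  have hpos : 0 ≤ (A *ᵥ v⁺) s :=
    mulVec_apply_nonneg_of_apply_eq_zero hA (posPart_nonneg v) (posPart_eq_zero.mpr hs)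
  have hsplit : A *ᵥ v = A *ᵥ v⁺ - A *ᵥ v⁻ := by rw [← mulVec_sub, posPart_sub_negPart]
  rw [hsplit, Pi.sub_apply]
  linarith

theorem negPartDerivRight_mulVec_le (hA : ∀ s s', s ≠ s' → 0 ≤ A s s') (v : S → ℝ) (s : S) :
    negPartDerivRight (v s) ((A *ᵥ v) s) ≤ if v s ≤ 0 then (A *ᵥ v⁻) s else 0 := by
  have hle := fun hs => neg_mulVec_apply_le_mulVec_negPart hA (v := v) (s := s) hs
  unfold negPartDerivRight
  rcases lt_trichotomy (v s) 0 with hneg | hzero | hpos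
  · simp [hneg, hneg.le, hle hneg.le]
  · have hnonneg : 0 ≤ (A *ᵥ v⁻) s := mulVec_apply_nonneg_of_apply_eq_zero hA
      (negPart_nonneg v) (by simp [hzero])
    simp only [hzero, lt_irrefl, if_false, if_true, le_refl]
    exact max_le (hle hzero.le) hnonneg
  · simp [not_lt.mpr hpos.le, hpos.ne', not_le.mpr hpos]

theorem sum_negPartDerivRight_mulVec_nonpos (hA : ∀ s s', s ≠ s' → 0 ≤ A s s')
    (hcol : ∀ s', ∑ s, A s s' = 0) (v : S → ℝ) :
    ∑ s, negPartDerivRight (v s) ((A *ᵥ v) s) ≤ 0 := by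
  set Z := univ.filter fun s => v s ≤ 0
  have hcolZ : ∀ s' ∈ Z, ∑ s ∈ Z, A s s' ≤ 0 := fun s' hs' =>
    (hcol s') ▸ sum_le_sum_of_subset_of_nonneg (subset_univ Z) fun s _ hs =>
      hA s s' (ne_of_mem_of_not_mem hs' hs).symm
  calc ∑ s, negPartDerivRight (v s) ((A *ᵥ v) s)
      ≤ ∑ s, if v s ≤ 0 then (A *ᵥ v⁻) s else 0 :=
        sum_le_sum fun s _ => negPartDerivRight_mulVec_le hA v s
    _ = ∑ s', (∑ s ∈ Z, A s s') * (v s')⁻ := by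
        simp only [← sum_filter, mulVec, dotProduct, Pi.negPart_apply, sum_mul]
        exact sum_comm
    _ ≤ 0 := sum_nonpos fun s' _ => by
        by_cases hs' : s' ∈ Z
        · exact mul_nonpos_of_nonpos_of_nonneg (hcolZ s' hs') (negPart_nonneg _)
        · have hpos : 0 < v s' := by simpa [Z] using hs'
          simp [negPart_eq_zero.mpr hpos.le]

end RateMatrix

section ForwardEquation

variable {S : Type*} [Fintype S] {A : ℝ → Matrix S S ℝ} {p : ℝ → S → ℝ}

theorem sum_eq_of_hasDerivAt_mulVec (hcol : ∀ t : ℝ, 0 ≤ t → ∀ s' : S, ∑ s, A t s s' = 0)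
    (hp : ∀ t : ℝ, 0 ≤ t → HasDerivAt p (A t *ᵥ p t) t) {T : ℝ} (hT : 0 ≤ T) :
    ∑ s, p T s = ∑ s, p 0 s := by
  have hderiv : ∀ t, 0 ≤ t → HasDerivAt (fun t => ∑ s, p t s) 0 t := fun t ht => by
    simpa only [sum_mulVec_eq_zero (hcol t ht)] using
      HasDerivAt.fun_sum (u := univ) fun s _ => hasDerivAt_pi.mp (hp t ht) s
  exact constant_of_has_deriv_right_zero
    (fun t ht => (hderiv t ht.1).continuousAt.continuousWithinAt)
    (fun t ht => (hderiv t ht.1).hasDerivWithinAt) T ⟨hT, le_rfl⟩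

theorem nonneg_of_hasDerivAt_mulVec (hoff : ∀ t : ℝ, 0 ≤ t → ∀ s s' : S, s ≠ s' → 0 ≤ A t s s')
    (hcol : ∀ t : ℝ, 0 ≤ t → ∀ s' : S, ∑ s, A t s s' = 0)
    (hp : ∀ t : ℝ, 0 ≤ t → HasDerivAt p (A t *ᵥ p t) t) (hp0 : ∀ s, 0 ≤ p 0 s)
    {T : ℝ} (hT : 0 ≤ T) (s : S) : 0 ≤ p T s := by
  have hcont : Continuous fun v : S → ℝ => ∑ s, (v s)⁻ :=
    continuous_finsetSum _ fun s _ => continuous_negPart.comp (continuous_apply s)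
  have hmass : ∑ s, (p T s)⁻ ≤ 0 :=
    image_le_of_deriv_right_le_deriv_boundary (B := 0) (B' := 0)
      (fun t ht => (hcont.continuousAt.comp (hp t ht.1).continuousAt).continuousWithinAt)
      (fun t ht => HasDerivWithinAt.fun_sum fun s _ =>
        (hasDerivAt_pi.mp (hp t ht.1) s).hasDerivWithinAt_Ici_negPart)
      (by simp [negPart_eq_zero.mpr (hp0 _)]) continuousOn_const
      (fun _ _ => hasDerivWithinAt_const _ _ _)
      (fun t ht => sum_negPartDerivRight_mulVec_nonpos (hoff t ht.1) (hcol t ht.1) (p t))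
      ⟨hT, le_rfl⟩
  have hzero := (sum_eq_zero_iff_of_nonneg fun s _ => negPart_nonneg (p T s)).mp
    (le_antisymm hmass (sum_nonneg fun s _ => negPart_nonneg _)) s (mem_univ s)
  exact negPart_eq_zero.mp hzero

end ForwardEquation

theorem stmt2_general {S : Type} [Fintype S] (A : ℝ → Matrix S S ℝ)
    (hAoffdiag : ∀ t : ℝ, 0 ≤ t → ∀ s s' : S, s ≠ s' → 0 ≤ A t s s')
    (hAcolsum : ∀ t : ℝ, 0 ≤ t → ∀ s' : S, ∑ s, A t s s' = 0)
    (p : ℝ → S → ℝ)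
    (hp : ∀ t : ℝ, 0 ≤ t → HasDerivAt p ((A t).mulVec (p t)) t)
    (hp0 : p 0 ∈ probSimplex S) :
    ∀ t : ℝ, 0 ≤ t → p t ∈ probSimplex S := fun _ ht =>
  ⟨nonneg_of_hasDerivAt_mulVec hAoffdiag hAcolsum hp hp0.1 ht,
    (sum_eq_of_hasDerivAt_mulVec hAcolsum hp ht).trans hp0.2⟩

/-- for a continuous time-dependent rate matrix `A(t)` (nonnegative
off-diagonal entries, columns summing to zero), any solution of the Kolmogorov forward
equation `p' = A(t) p` starting in the simplex Δ stays in Δ. -/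
theorem stmt2 {S : Type} [Fintype S] (A : ℝ → Matrix S S ℝ)
    (hAcont : ContinuousOn (fun t => A t) (Ici (0:ℝ)))
    (hAoffdiag : ∀ t : ℝ, 0 ≤ t → ∀ s s' : S, s ≠ s' → 0 ≤ A t s s')
    (hAcolsum : ∀ t : ℝ, 0 ≤ t → ∀ s' : S, ∑ s, A t s s' = 0)
    (p : ℝ → S → ℝ)
    (hp : ∀ t : ℝ, 0 ≤ t → HasDerivAt p ((A t).mulVec (p t)) t)
    (hp0 : p 0 ∈ probSimplex S) :
    ∀ t : ℝ, 0 ≤ t → p t ∈ probSimplex S :=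
  stmt2_general A hAoffdiag hAcolsum p hp hp0
end

section
/- Let W : [0,1]×[0,1] → [0,1] be a measurable symmetric connected graphon kernel, let β > 0, and suppose β · ‖𝕎‖_{op,2} ≤ 1. Then every solution u of the graphon SIS equation satisfies lim_{t→∞} u(t,x) = 0 for all x ∈ [0,1]. -/
/-!
Write `M = ∫ u²`, `Y = ∫ u³` and `a = ∫ u² 𝕎u`. Differentiating under the integral sign,
`M' = -2M + 2β ∫ u 𝕎u - 2β a ≤ -2β a`, because Cauchy–Schwarz and the definition of the operator
norm give `β ∫ u 𝕎u ≤ β ‖𝕎‖ M ≤ M`. Similarly `Y' ≤ -3Y + 3β a`, so `(Y + 3M/2)' ≤ -3Y`; as `M` is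
nonincreasing and hence convergent, this forces `Y → 0`. Then `∫ u → 0`, since `s ≤ δ + s³/δ²`
for `s ≥ 0`, and each `u(·, x)` satisfies `∂ₜu ≤ -u + β ∫ u`, so it tends to `0` as well.
-/

open MeasureTheory Set Filter

/-- The L² operator norm of the integral operator with kernel `K` on L²[0,1]. -/
noncomputable def opNorm2 (K : ℝ → ℝ → ℝ) : ℝ :=
  sSup { r | ∃ f : ℝ → ℝ, Measurable f ∧ (∫ x in Icc (0:ℝ) 1, (f x) ^ 2) = 1 ∧
    r = Real.sqrt (∫ x in Icc (0:ℝ) 1, (∫ y in Icc (0:ℝ) 1, K x y * f y) ^ 2) }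

/-- The kernel `W` is connected: `∫_{A × Aᶜ} W > 0` for every measurable `A ⊆ [0,1]`
with `0 < μ(A) < 1`. -/
def IsConnectedKernel (W : ℝ → ℝ → ℝ) : Prop :=
  ∀ A : Set ℝ, MeasurableSet A → A ⊆ Icc (0:ℝ) 1 →
    0 < volume A → volume A < 1 →
    0 < ∫ p in A ×ˢ (Icc (0:ℝ) 1 \ A), W p.1 p.2

/-- `u` is a solution of the graphon SIS equation
`∂ₜ u(t,x) = −u(t,x) + β (1 − u(t,x)) (𝕎 u(t,·))(x)` on `[0,∞) × [0,1]`,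
taking values in [0,1], measurable in `x` and differentiable in `t`. -/
def IsSISSolution (W : ℝ → ℝ → ℝ) (β : ℝ) (u : ℝ → ℝ → ℝ) : Prop :=
  (∀ t : ℝ, 0 ≤ t → ∀ x ∈ Icc (0:ℝ) 1, u t x ∈ Icc (0:ℝ) 1) ∧
  (∀ t : ℝ, 0 ≤ t → Measurable (u t)) ∧
  (∀ t : ℝ, 0 ≤ t → ∀ x ∈ Icc (0:ℝ) 1,
    HasDerivAt (fun τ => u τ x)
      (-(u t x) + β * (1 - u t x) * ∫ y in Icc (0:ℝ) 1, W x y * u t y) t)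

open Real Topology

theorem antitoneOn_Ici_of_hasDerivAt_nonpos {f f' : ℝ → ℝ} {R : ℝ}
    (hf : ∀ t ∈ Ici R, HasDerivAt f (f' t) t) (hf' : ∀ t ∈ Ici R, f' t ≤ 0) :
    AntitoneOn f (Ici R) :=
  antitoneOn_of_hasDerivWithinAt_nonpos (convex_Ici R)
    (fun t ht => (hf t ht).continuousAt.continuousWithinAt)
    (fun t ht => (hf t (interior_subset ht)).hasDerivWithinAt)
    (fun t ht => hf' t (interior_subset ht))

theorem tendsto_zero_of_hasDerivAt_le_neg_mul_add {y y' g : ℝ → ℝ} {c : ℝ} (hc : 0 < c)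
    (hy : ∀ᶠ t in atTop, 0 ≤ y t)
    (hy' : ∀ᶠ t in atTop, HasDerivAt y (y' t) t ∧ y' t ≤ -c * y t + g t)
    (hg : Tendsto g atTop (𝓝 0)) : Tendsto y atTop (𝓝 0) := by
  refine tendsto_order.2 ⟨fun a ha => hy.mono fun t ht => ha.trans_le ht, fun ε hε => ?_⟩
  obtain ⟨R, hR⟩ := eventually_atTop.1
    (hy'.and (hg.eventually (gt_mem_nhds (mul_pos hc (half_pos hε)))))
  have hanti : AntitoneOn (fun t => exp (c * t) * (y t - ε / 2)) (Ici R) := by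
    refine antitoneOn_Ici_of_hasDerivAt_nonpos
      (fun t ht => (((hasDerivAt_id t).const_mul c).exp).mul ((hR t ht).1.1.sub_const _))
      fun t ht => ?_
    obtain ⟨⟨-, hyt⟩, hgt⟩ := hR t ht
    have := exp_pos (c * t)
    simp only [id, mul_one]
    nlinarith
  have hdecay : Tendsto (fun t => exp (c * (R - t)) * (y R - ε / 2)) atTop (𝓝 0) := by
    have : Tendsto (fun t => c * (R - t)) atTop atBot :=
      (tendsto_atBot_add_const_left _ R tendsto_neg_atTop_atBot).const_mul_atBot hc
    simpa using (tendsto_exp_atBot.comp this).mul_const (y R - ε / 2)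
  filter_upwards [hdecay.eventually (gt_mem_nhds (half_pos hε)), eventually_ge_atTop R]
    with t hsmall ht
  have hmono : exp (c * t) * (y t - ε / 2) ≤ exp (c * t) * (exp (c * (R - t)) * (y R - ε / 2)) := by
    calc exp (c * t) * (y t - ε / 2) ≤ exp (c * R) * (y R - ε / 2) := hanti self_mem_Ici ht ht
      _ = _ := by rw [← mul_assoc, ← exp_add]; ring_nf
  linarith [le_of_mul_le_mul_left hmono (exp_pos _)]

theorem tendsto_zero_of_hasDerivAt_add_le {y y' m m' : ℝ → ℝ} {c : ℝ} (hc : 0 < c)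
    (hy : ∀ᶠ t in atTop, 0 ≤ y t) (hm : BddBelow (range m))
    (hderiv : ∀ᶠ t in atTop, HasDerivAt y (y' t) t ∧ HasDerivAt m (m' t) t ∧ m' t ≤ 0 ∧
      y' t + m' t ≤ -c * y t) :
    Tendsto y atTop (𝓝 0) := by
  obtain ⟨R, hR⟩ := eventually_atTop.1 hderiv
  have hanti : AntitoneOn m (Ici R) :=
    antitoneOn_Ici_of_hasDerivAt_nonpos (fun t ht => (hR t ht).2.1) fun t ht => (hR t ht).2.2.1
  obtain ⟨L, hmL, hLm⟩ : ∃ L, Tendsto m atTop (𝓝 L) ∧ ∀ t ≥ R, L ≤ m t := by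
    have hanti' : Antitone fun t => m (max t R) := fun a b hab =>
      hanti (mem_Ici.2 (le_max_right a R)) (mem_Ici.2 (le_max_right b R))
        (max_le_max_right R hab)
    have hbdd : BddBelow (range fun t => m (max t R)) :=
      hm.mono (range_comp_subset_range (fun t => max t R) m)
    refine ⟨_, (tendsto_atTop_ciInf hanti' hbdd).congr' ?_, fun t ht => ?_⟩
    · filter_upwards [eventually_ge_atTop R] with t ht
      rw [max_eq_left ht]
    · simpa [max_eq_left ht] using ciInf_le hbdd t
  have hsum : Tendsto (fun t => y t + (m t - L)) atTop (𝓝 0) := by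
    refine tendsto_zero_of_hasDerivAt_le_neg_mul_add hc (y' := fun t => y' t + m' t)
      (g := fun t => c * (m t - L)) ?_ ?_ ?_
    · filter_upwards [hy, eventually_ge_atTop R] with t hyt ht
      linarith [hLm t ht]
    · filter_upwards [eventually_ge_atTop R] with t ht
      obtain ⟨hyd, hmd, -, hle⟩ := hR t ht
      exact ⟨hyd.add (hmd.sub_const L), by linarith⟩
    · simpa using (hmL.sub_const L).const_mul c
  refine tendsto_of_tendsto_of_tendsto_of_le_of_le' tendsto_const_nhds hsum hy ?_
  filter_upwards [eventually_ge_atTop R] with t ht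
  linarith [hLm t ht]

theorem integral_mul_le_sqrt_mul_sqrt {α : Type*} [MeasurableSpace α] {μ : Measure α}
    {f g : α → ℝ} (hf0 : 0 ≤ᵐ[μ] f) (hg0 : 0 ≤ᵐ[μ] g) (hf : MemLp f 2 μ) (hg : MemLp g 2 μ) :
    ∫ a, f a * g a ∂μ ≤ √(∫ a, f a ^ 2 ∂μ) * √(∫ a, g a ^ 2 ∂μ) := by
  have h := integral_mul_le_Lp_mul_Lq_of_nonneg Real.HolderConjugate.two_two hf0 hg0
    (by simpa using hf) (by simpa using hg)
  simpa only [Real.rpow_two, ← Real.sqrt_eq_rpow] using h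

theorem le_add_pow_three_div_sq {s δ : ℝ} (hs : 0 ≤ s) (hδ : 0 < δ) :
    s ≤ δ + s ^ 3 / δ ^ 2 := by
  rw [← sub_nonneg, show δ + s ^ 3 / δ ^ 2 - s = (δ * δ ^ 2 + s ^ 3 - s * δ ^ 2) / δ ^ 2 by
    field_simp]
  refine div_nonneg ?_ (by positivity)
  nlinarith [mul_nonneg (sq_nonneg (s - δ)) (add_nonneg hs hδ.le), mul_nonneg (sq_nonneg s) hδ.le]

/-- The integral operator `𝕎` of the paper. -/
noncomputable def graphonOp (W : ℝ → ℝ → ℝ) (f : ℝ → ℝ) (x : ℝ) : ℝ :=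
  ∫ y in Icc (0:ℝ) 1, W x y * f y

section graphonOp

variable {W : ℝ → ℝ → ℝ} {f : ℝ → ℝ}

theorem measurable_graphonOp (hW : Measurable (fun p : ℝ × ℝ => W p.1 p.2))
    (hf : Measurable f) : Measurable (graphonOp W f) :=
  (StronglyMeasurable.integral_prod_right (f := fun x y => W x y * f y)
    (hW.mul (hf.comp measurable_snd)).stronglyMeasurable).measurable

theorem graphonOp_nonneg (hW01 : ∀ x ∈ Icc (0:ℝ) 1, ∀ y ∈ Icc (0:ℝ) 1, W x y ∈ Icc (0:ℝ) 1)
    (hf : ∀ y ∈ Icc (0:ℝ) 1, 0 ≤ f y) {x : ℝ} (hx : x ∈ Icc (0:ℝ) 1) :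
    0 ≤ graphonOp W f x :=
  setIntegral_nonneg measurableSet_Icc fun y hy => mul_nonneg (hW01 x hx y hy).1 (hf y hy)

theorem graphonOp_le_integral
    (hW01 : ∀ x ∈ Icc (0:ℝ) 1, ∀ y ∈ Icc (0:ℝ) 1, W x y ∈ Icc (0:ℝ) 1)
    (hf : ∀ y ∈ Icc (0:ℝ) 1, 0 ≤ f y) (hfi : IntegrableOn f (Icc 0 1))
    {x : ℝ} (hx : x ∈ Icc (0:ℝ) 1) :
    graphonOp W f x ≤ ∫ y in Icc (0:ℝ) 1, f y :=
  integral_mono_of_nonneg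
    (ae_restrict_of_forall_mem measurableSet_Icc fun y hy =>
      mul_nonneg (hW01 x hx y hy).1 (hf y hy)) hfi
    (ae_restrict_of_forall_mem measurableSet_Icc fun y hy =>
      mul_le_of_le_one_left (hf y hy) (hW01 x hx y hy).2)

theorem graphonOp_const_mul (c : ℝ) (x : ℝ) :
    graphonOp W (fun y => c * f y) x = c * graphonOp W f x := by
  simp only [graphonOp, mul_left_comm _ c, integral_const_mul]

theorem opNorm2_nonneg : 0 ≤ opNorm2 W :=
  Real.sSup_nonneg fun _ ⟨_, _, _, hr⟩ => hr ▸ Real.sqrt_nonneg _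

/-- This bounds the set whose `sSup` is `opNorm2`; an unbounded set would have the junk
supremum `0`. -/
theorem sqrt_integral_sq_graphonOp_le_one
    (hW01 : ∀ x ∈ Icc (0:ℝ) 1, ∀ y ∈ Icc (0:ℝ) 1, W x y ∈ Icc (0:ℝ) 1)
    (hf2 : ∫ x in Icc (0:ℝ) 1, f x ^ 2 = 1) :
    √(∫ x in Icc (0:ℝ) 1, graphonOp W f x ^ 2) ≤ 1 := by
  have hf2i : IntegrableOn (fun x => f x ^ 2) (Icc 0 1) := by
    by_contra h
    rw [integral_undef h] at hf2
    exact zero_ne_one hf2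
  have hbound : ∀ x ∈ Icc (0:ℝ) 1, |graphonOp W f x| ≤ 1 := fun x hx => by
    calc |graphonOp W f x| ≤ ∫ y in Icc (0:ℝ) 1, |W x y * f y| := by
          simpa only [graphonOp, Real.norm_eq_abs] using
            norm_integral_le_integral_norm (fun y => W x y * f y)
      _ ≤ ∫ y in Icc (0:ℝ) 1, (1 + f y ^ 2) / 2 := by
          refine integral_mono_of_nonneg (ae_of_all _ fun y => abs_nonneg _)
            ((integrable_const 1).add hf2i |>.div_const 2)
            (ae_restrict_of_forall_mem measurableSet_Icc fun y hy => ?_)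
          have hW := hW01 x hx y hy
          show |W x y * f y| ≤ (1 + f y ^ 2) / 2
          rw [abs_mul, abs_of_nonneg hW.1]
          nlinarith [sq_nonneg (|f y| - 1), sq_abs (f y),
            mul_le_of_le_one_left (abs_nonneg (f y)) hW.2]
      _ = 1 := by
          rw [integral_div, integral_add (integrable_const 1) hf2i, hf2]
          norm_num
  refine Real.sqrt_le_one.2 ?_
  calc ∫ x in Icc (0:ℝ) 1, graphonOp W f x ^ 2 ≤ ∫ _ in Icc (0:ℝ) 1, (1:ℝ) :=
        integral_mono_of_nonneg (ae_of_all _ fun x => sq_nonneg _) (integrable_const 1)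
          (ae_restrict_of_forall_mem measurableSet_Icc fun x hx =>
            (sq_le_one_iff_abs_le_one _).2 (hbound x hx))
    _ = 1 := by simp

theorem le_opNorm2 (hW01 : ∀ x ∈ Icc (0:ℝ) 1, ∀ y ∈ Icc (0:ℝ) 1, W x y ∈ Icc (0:ℝ) 1)
    (hf : Measurable f) (hf2 : ∫ x in Icc (0:ℝ) 1, f x ^ 2 = 1) :
    √(∫ x in Icc (0:ℝ) 1, graphonOp W f x ^ 2) ≤ opNorm2 W :=
  le_csSup ⟨1, by rintro _ ⟨g, -, hg2, rfl⟩; exact sqrt_integral_sq_graphonOp_le_one hW01 hg2⟩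
    ⟨f, hf, hf2, rfl⟩

theorem sqrt_integral_sq_graphonOp_le
    (hW01 : ∀ x ∈ Icc (0:ℝ) 1, ∀ y ∈ Icc (0:ℝ) 1, W x y ∈ Icc (0:ℝ) 1)
    (hf : Measurable f) (hf2 : IntegrableOn (fun x => f x ^ 2) (Icc 0 1)) :
    √(∫ x in Icc (0:ℝ) 1, graphonOp W f x ^ 2) ≤ opNorm2 W * √(∫ x in Icc (0:ℝ) 1, f x ^ 2) := by
  set N := ∫ x in Icc (0:ℝ) 1, f x ^ 2
  rcases (show 0 ≤ N from integral_nonneg fun x => sq_nonneg (f x)).eq_or_lt with hN | hN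
  · have hf0 : ∀ᵐ y ∂volume.restrict (Icc (0:ℝ) 1), f y = 0 := by
      filter_upwards [(integral_eq_zero_iff_of_nonneg (fun x => sq_nonneg _) hf2).1 hN.symm]
        with y hy
      simpa using hy
    have hWf : ∀ x, graphonOp W f x = 0 := fun x => by
      unfold graphonOp
      exact integral_eq_zero_of_ae (hf0.mono fun y hy => by simp [hy])
    simpa [hWf] using mul_nonneg opNorm2_nonneg (Real.sqrt_nonneg N)
  · have hsN : 0 < √N := Real.sqrt_pos.2 hN
    have hunit : ∫ x in Icc (0:ℝ) 1, ((√N)⁻¹ * f x) ^ 2 = 1 := by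
      simp_rw [mul_pow, integral_const_mul, inv_pow, Real.sq_sqrt hN.le]
      exact inv_mul_cancel₀ hN.ne'
    have h := le_opNorm2 hW01 (hf.const_mul _) hunit
    simp_rw [graphonOp_const_mul, mul_pow, integral_const_mul,
      Real.sqrt_mul (sq_nonneg _), Real.sqrt_sq (inv_nonneg.2 hsN.le)] at h
    rw [mul_comm]
    exact (inv_mul_le_iff₀ hsN).1 h

theorem integral_mul_graphonOp_le (hW : Measurable (fun p : ℝ × ℝ => W p.1 p.2))
    (hW01 : ∀ x ∈ Icc (0:ℝ) 1, ∀ y ∈ Icc (0:ℝ) 1, W x y ∈ Icc (0:ℝ) 1)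
    (hf : Measurable f) (hf01 : ∀ x ∈ Icc (0:ℝ) 1, f x ∈ Icc (0:ℝ) 1) :
    ∫ x in Icc (0:ℝ) 1, f x * graphonOp W f x ≤ opNorm2 W * ∫ x in Icc (0:ℝ) 1, f x ^ 2 := by
  have hf0 : ∀ x ∈ Icc (0:ℝ) 1, 0 ≤ f x := fun x hx => (hf01 x hx).1
  have hfL2 : MemLp f 2 (volume.restrict (Icc 0 1)) :=
    MemLp.of_bound hf.aestronglyMeasurable 1 (ae_restrict_of_forall_mem measurableSet_Icc
      fun x hx => by rw [Real.norm_of_nonneg (hf0 x hx)]; exact (hf01 x hx).2)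
  have hWfL2 : MemLp (graphonOp W f) 2 (volume.restrict (Icc 0 1)) :=
    MemLp.of_bound (measurable_graphonOp hW hf).aestronglyMeasurable 1
      (ae_restrict_of_forall_mem measurableSet_Icc fun x hx => by
        rw [Real.norm_of_nonneg (graphonOp_nonneg hW01 hf0 hx)]
        calc graphonOp W f x ≤ ∫ y in Icc (0:ℝ) 1, f y :=
              graphonOp_le_integral hW01 hf0 (hfL2.integrable one_le_two) hx
          _ ≤ ∫ _ in Icc (0:ℝ) 1, (1:ℝ) :=
              setIntegral_mono_on (hfL2.integrable one_le_two) (integrable_const 1)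
                measurableSet_Icc fun y hy => (hf01 y hy).2
          _ = 1 := by simp)
  calc ∫ x in Icc (0:ℝ) 1, f x * graphonOp W f x
      ≤ √(∫ x in Icc (0:ℝ) 1, f x ^ 2) * √(∫ x in Icc (0:ℝ) 1, graphonOp W f x ^ 2) :=
        integral_mul_le_sqrt_mul_sqrt (ae_restrict_of_forall_mem measurableSet_Icc hf0)
          (ae_restrict_of_forall_mem measurableSet_Icc fun x hx => graphonOp_nonneg hW01 hf0 hx)
          hfL2 hWfL2
    _ ≤ √(∫ x in Icc (0:ℝ) 1, f x ^ 2) * (opNorm2 W * √(∫ x in Icc (0:ℝ) 1, f x ^ 2)) := by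
        gcongr
        exact sqrt_integral_sq_graphonOp_le hW01 hf (hfL2.integrable_sq)
    _ = opNorm2 W * ∫ x in Icc (0:ℝ) 1, f x ^ 2 := by
        rw [mul_left_comm, Real.mul_self_sqrt (integral_nonneg fun x => sq_nonneg _)]

end graphonOp

noncomputable def sisField (W : ℝ → ℝ → ℝ) (β : ℝ) (f : ℝ → ℝ) (x : ℝ) : ℝ :=
  -f x + β * (1 - f x) * graphonOp W f x

noncomputable def spatialMoment (u : ℝ → ℝ → ℝ) (n : ℕ) (t : ℝ) : ℝ :=
  ∫ x in Icc (0:ℝ) 1, u t x ^ n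

noncomputable def spatialMomentDeriv (W : ℝ → ℝ → ℝ) (β : ℝ) (u : ℝ → ℝ → ℝ) (n : ℕ)
    (t : ℝ) : ℝ :=
  ∫ x in Icc (0:ℝ) 1, n * u t x ^ (n - 1) * sisField W β (u t) x

namespace IsSISSolution

variable {W : ℝ → ℝ → ℝ} {β : ℝ} {u : ℝ → ℝ → ℝ} {t x : ℝ}

theorem mem_Icc (hu : IsSISSolution W β u) (ht : 0 ≤ t) (hx : x ∈ Icc (0:ℝ) 1) :
    u t x ∈ Icc (0:ℝ) 1 :=
  hu.1 t ht x hx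

theorem measurable (hu : IsSISSolution W β u) (ht : 0 ≤ t) : Measurable (u t) :=
  hu.2.1 t ht

theorem hasDerivAt (hu : IsSISSolution W β u) (ht : 0 ≤ t) (hx : x ∈ Icc (0:ℝ) 1) :
    HasDerivAt (fun τ => u τ x) (sisField W β (u t) x) t :=
  hu.2.2 t ht x hx

theorem integrableOn_pow (hu : IsSISSolution W β u) (ht : 0 ≤ t) (n : ℕ) :
    IntegrableOn (fun x => u t x ^ n) (Icc 0 1) :=
  Integrable.of_bound ((hu.measurable ht).pow_const n).aestronglyMeasurable 1
    (ae_restrict_of_forall_mem measurableSet_Icc fun x hx => by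
      obtain ⟨h0, h1⟩ := hu.mem_Icc ht hx
      rw [Real.norm_of_nonneg (pow_nonneg h0 n)]
      exact pow_le_one₀ h0 h1)

theorem spatialMoment_nonneg (hu : IsSISSolution W β u) (ht : 0 ≤ t) (n : ℕ) :
    0 ≤ spatialMoment u n t :=
  setIntegral_nonneg measurableSet_Icc fun _ hx => pow_nonneg (hu.mem_Icc ht hx).1 n

theorem spatialMoment_le_one (hu : IsSISSolution W β u) (ht : 0 ≤ t) (n : ℕ) :
    spatialMoment u n t ≤ 1 :=
  calc spatialMoment u n t ≤ ∫ _ in Icc (0:ℝ) 1, (1:ℝ) :=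
        setIntegral_mono_on (hu.integrableOn_pow ht n) (integrable_const 1) measurableSet_Icc
          fun x hx => pow_le_one₀ (hu.mem_Icc ht hx).1 (hu.mem_Icc ht hx).2
    _ = 1 := by simp

theorem graphonOp_le_spatialMoment_one
    (hW01 : ∀ x ∈ Icc (0:ℝ) 1, ∀ y ∈ Icc (0:ℝ) 1, W x y ∈ Icc (0:ℝ) 1)
    (hu : IsSISSolution W β u) (ht : 0 ≤ t) (hx : x ∈ Icc (0:ℝ) 1) :
    graphonOp W (u t) x ≤ spatialMoment u 1 t := by
  simpa [spatialMoment] using graphonOp_le_integral hW01 (fun y hy => (hu.mem_Icc ht hy).1)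
    (by simpa using hu.integrableOn_pow ht 1) hx

theorem graphonOp_mem_Icc (hW01 : ∀ x ∈ Icc (0:ℝ) 1, ∀ y ∈ Icc (0:ℝ) 1, W x y ∈ Icc (0:ℝ) 1)
    (hu : IsSISSolution W β u) (ht : 0 ≤ t) (hx : x ∈ Icc (0:ℝ) 1) :
    graphonOp W (u t) x ∈ Icc (0:ℝ) 1 :=
  ⟨graphonOp_nonneg hW01 (fun _ hy => (hu.mem_Icc ht hy).1) hx,
    (hu.graphonOp_le_spatialMoment_one hW01 ht hx).trans (hu.spatialMoment_le_one ht 1)⟩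

theorem integrableOn_pow_mul_graphonOp (hW : Measurable (fun p : ℝ × ℝ => W p.1 p.2))
    (hW01 : ∀ x ∈ Icc (0:ℝ) 1, ∀ y ∈ Icc (0:ℝ) 1, W x y ∈ Icc (0:ℝ) 1)
    (hu : IsSISSolution W β u) (ht : 0 ≤ t) (n : ℕ) :
    IntegrableOn (fun x => u t x ^ n * graphonOp W (u t) x) (Icc 0 1) :=
  Integrable.of_bound (((hu.measurable ht).pow_const n).mul
    (measurable_graphonOp hW (hu.measurable ht))).aestronglyMeasurable 1
    (ae_restrict_of_forall_mem measurableSet_Icc fun x hx => by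
      obtain ⟨h0, h1⟩ := hu.mem_Icc ht hx
      obtain ⟨hW0, hW1⟩ := hu.graphonOp_mem_Icc hW01 ht hx
      rw [Real.norm_of_nonneg (mul_nonneg (pow_nonneg h0 n) hW0)]
      exact mul_le_one₀ (pow_le_one₀ h0 h1) hW0 hW1)

theorem abs_sisField_le (hW01 : ∀ x ∈ Icc (0:ℝ) 1, ∀ y ∈ Icc (0:ℝ) 1, W x y ∈ Icc (0:ℝ) 1)
    (hβ : 0 ≤ β) (hu : IsSISSolution W β u) (ht : 0 ≤ t) (hx : x ∈ Icc (0:ℝ) 1) :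
    |sisField W β (u t) x| ≤ 1 + β := by
  obtain ⟨h0, h1⟩ := hu.mem_Icc ht hx
  obtain ⟨hW0, hW1⟩ := hu.graphonOp_mem_Icc hW01 ht hx
  have hprod : 0 ≤ β * (1 - u t x) * graphonOp W (u t) x :=
    mul_nonneg (mul_nonneg hβ (by linarith)) hW0
  have hprod' : β * (1 - u t x) * graphonOp W (u t) x ≤ β :=
    calc β * (1 - u t x) * graphonOp W (u t) x ≤ β * 1 * 1 := by gcongr; linarith
      _ = β := by ring
  rw [sisField, abs_le]
  constructor <;> linarith

theorem hasDerivAt_spatialMoment (hW : Measurable (fun p : ℝ × ℝ => W p.1 p.2))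
    (hW01 : ∀ x ∈ Icc (0:ℝ) 1, ∀ y ∈ Icc (0:ℝ) 1, W x y ∈ Icc (0:ℝ) 1)
    (hβ : 0 ≤ β) (hu : IsSISSolution W β u) (n : ℕ) (ht : 0 < t) :
    HasDerivAt (spatialMoment u n) (spatialMomentDeriv W β u n t) t := by
  have hpos : ∀ τ ∈ Metric.ball t t, 0 ≤ τ := fun τ hτ => by
    rw [Real.ball_eq_Ioo, sub_self] at hτ
    exact hτ.1.le
  refine (hasDerivAt_integral_of_dominated_loc_of_deriv_le (μ := volume.restrict (Icc 0 1))
    (F := fun τ x => u τ x ^ n) (F' := fun τ x => n * u τ x ^ (n - 1) * sisField W β (u τ) x)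
    (bound := fun _ => n * (1 + β))
    (Metric.ball_mem_nhds t ht) ?_ (hu.integrableOn_pow ht.le n) ?_ ?_ (integrable_const _)
    ?_).2
  · filter_upwards [Metric.ball_mem_nhds t ht] with τ hτ
    exact ((hu.measurable (hpos τ hτ)).pow_const n).aestronglyMeasurable
  · have hum := hu.measurable ht.le
    exact ((measurable_const.mul (hum.pow_const _)).mul (hum.neg.add
      ((measurable_const.mul (measurable_const.sub hum)).mul
        (measurable_graphonOp hW hum)))).aestronglyMeasurable
  · refine ae_restrict_of_forall_mem measurableSet_Icc fun x hx τ hτ => ?_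
    obtain ⟨h0, h1⟩ := hu.mem_Icc (hpos τ hτ) hx
    calc ‖(n : ℝ) * u τ x ^ (n - 1) * sisField W β (u τ) x‖
        = n * u τ x ^ (n - 1) * |sisField W β (u τ) x| := by
          rw [Real.norm_eq_abs, abs_mul, abs_mul, Nat.abs_cast, abs_pow, abs_of_nonneg h0]
      _ ≤ n * 1 * (1 + β) := by
          gcongr
          · exact pow_le_one₀ h0 h1
          · exact hu.abs_sisField_le hW01 hβ (hpos τ hτ) hx
      _ = n * (1 + β) := by ring
  · exact ae_restrict_of_forall_mem measurableSet_Icc fun x hx τ hτ =>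
      (hu.hasDerivAt (hpos τ hτ) hx).pow n

theorem spatialMomentDeriv_two_le (hW : Measurable (fun p : ℝ × ℝ => W p.1 p.2))
    (hW01 : ∀ x ∈ Icc (0:ℝ) 1, ∀ y ∈ Icc (0:ℝ) 1, W x y ∈ Icc (0:ℝ) 1)
    (hβ : 0 ≤ β) (hsub : β * opNorm2 W ≤ 1) (hu : IsSISSolution W β u) (ht : 0 ≤ t) :
    spatialMomentDeriv W β u 2 t
      ≤ -(2 * β) * ∫ x in Icc (0:ℝ) 1, u t x ^ 2 * graphonOp W (u t) x := by
  have hM := hu.integrableOn_pow ht 2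
  have hQ : IntegrableOn (fun x => u t x * graphonOp W (u t) x) (Icc 0 1) := by
    simpa using hu.integrableOn_pow_mul_graphonOp hW hW01 ht 1
  have ha := hu.integrableOn_pow_mul_graphonOp hW hW01 ht 2
  have hQM : β * ∫ x in Icc (0:ℝ) 1, u t x * graphonOp W (u t) x ≤ spatialMoment u 2 t :=
    calc β * ∫ x in Icc (0:ℝ) 1, u t x * graphonOp W (u t) x
        ≤ β * (opNorm2 W * ∫ x in Icc (0:ℝ) 1, u t x ^ 2) :=
          mul_le_mul_of_nonneg_left
            (integral_mul_graphonOp_le hW hW01 (hu.measurable ht) fun x hx => hu.mem_Icc ht hx) hβ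
      _ = (β * opNorm2 W) * ∫ x in Icc (0:ℝ) 1, u t x ^ 2 := by ring
      _ ≤ spatialMoment u 2 t :=
          mul_le_of_le_one_left (hu.spatialMoment_nonneg ht 2) hsub
  have hexpand : spatialMomentDeriv W β u 2 t
      = -2 * spatialMoment u 2 t
        + (2 * β * (∫ x in Icc (0:ℝ) 1, u t x * graphonOp W (u t) x)
          - 2 * β * (∫ x in Icc (0:ℝ) 1, u t x ^ 2 * graphonOp W (u t) x)) := by
    rw [spatialMoment, ← integral_const_mul, ← integral_const_mul, ← integral_const_mul,
      ← integral_sub (hQ.const_mul _) (ha.const_mul _), ← integral_add (hM.const_mul _) ?_]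
    · unfold spatialMomentDeriv sisField
      congr 1
      funext x
      push_cast
      ring
    · exact (hQ.const_mul _).sub (ha.const_mul _)
  rw [hexpand]
  linarith

theorem spatialMomentDeriv_three_le (hW : Measurable (fun p : ℝ × ℝ => W p.1 p.2))
    (hW01 : ∀ x ∈ Icc (0:ℝ) 1, ∀ y ∈ Icc (0:ℝ) 1, W x y ∈ Icc (0:ℝ) 1)
    (hβ : 0 ≤ β) (hu : IsSISSolution W β u) (ht : 0 ≤ t) :
    spatialMomentDeriv W β u 3 t
      ≤ -3 * spatialMoment u 3 t + 3 * β * ∫ x in Icc (0:ℝ) 1, u t x ^ 2 * graphonOp W (u t) x := by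
  have hY := hu.integrableOn_pow ht 3
  have ha := hu.integrableOn_pow_mul_graphonOp hW hW01 ht 2
  have hb := hu.integrableOn_pow_mul_graphonOp hW hW01 ht 3
  have hb0 : 0 ≤ ∫ x in Icc (0:ℝ) 1, u t x ^ 3 * graphonOp W (u t) x :=
    setIntegral_nonneg measurableSet_Icc fun x hx =>
      mul_nonneg (pow_nonneg (hu.mem_Icc ht hx).1 3) (hu.graphonOp_mem_Icc hW01 ht hx).1
  have hexpand : spatialMomentDeriv W β u 3 t
      = -3 * spatialMoment u 3 t
        + (3 * β * (∫ x in Icc (0:ℝ) 1, u t x ^ 2 * graphonOp W (u t) x)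
          - 3 * β * (∫ x in Icc (0:ℝ) 1, u t x ^ 3 * graphonOp W (u t) x)) := by
    rw [spatialMoment, ← integral_const_mul, ← integral_const_mul, ← integral_const_mul,
      ← integral_sub (ha.const_mul _) (hb.const_mul _), ← integral_add (hY.const_mul _) ?_]
    · unfold spatialMomentDeriv sisField
      congr 1
      funext x
      push_cast
      ring
    · exact (ha.const_mul _).sub (hb.const_mul _)
  rw [hexpand]
  linarith [mul_nonneg hβ hb0]

theorem tendsto_spatialMoment_three (hW : Measurable (fun p : ℝ × ℝ => W p.1 p.2))
    (hW01 : ∀ x ∈ Icc (0:ℝ) 1, ∀ y ∈ Icc (0:ℝ) 1, W x y ∈ Icc (0:ℝ) 1)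
    (hβ : 0 ≤ β) (hsub : β * opNorm2 W ≤ 1) (hu : IsSISSolution W β u) :
    Tendsto (spatialMoment u 3) atTop (𝓝 0) := by
  refine tendsto_zero_of_hasDerivAt_add_le three_pos (y' := spatialMomentDeriv W β u 3)
    (m := fun t => 3 / 2 * spatialMoment u 2 t)
    (m' := fun t => 3 / 2 * spatialMomentDeriv W β u 2 t) ?_ ?_ ?_
  · filter_upwards [eventually_ge_atTop 0] with t ht using hu.spatialMoment_nonneg ht 3
  · refine ⟨0, ?_⟩
    rintro _ ⟨t, rfl⟩
    exact mul_nonneg (by norm_num) (integral_nonneg fun x => sq_nonneg _)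
  · filter_upwards [eventually_gt_atTop 0] with t ht
    have h2 := hu.spatialMomentDeriv_two_le hW hW01 hβ hsub ht.le
    have h3 := hu.spatialMomentDeriv_three_le hW hW01 hβ ht.le
    have ha : 0 ≤ β * ∫ x in Icc (0:ℝ) 1, u t x ^ 2 * graphonOp W (u t) x :=
      mul_nonneg hβ (setIntegral_nonneg measurableSet_Icc fun x hx =>
        mul_nonneg (sq_nonneg _) (hu.graphonOp_mem_Icc hW01 ht.le hx).1)
    exact ⟨hu.hasDerivAt_spatialMoment hW hW01 hβ 3 ht,
      (hu.hasDerivAt_spatialMoment hW hW01 hβ 2 ht).const_mul _, by linarith, by linarith⟩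

theorem tendsto_spatialMoment_one (hu : IsSISSolution W β u)
    (h3 : Tendsto (spatialMoment u 3) atTop (𝓝 0)) :
    Tendsto (spatialMoment u 1) atTop (𝓝 0) := by
  refine tendsto_order.2 ⟨fun a ha => ?_, fun ε hε => ?_⟩
  · filter_upwards [eventually_ge_atTop 0] with t ht
    exact ha.trans_le (hu.spatialMoment_nonneg ht 1)
  obtain ⟨δ, hδ, rfl⟩ : ∃ δ, 0 < δ ∧ ε = δ + δ := ⟨ε / 2, half_pos hε, (add_halves ε).symm⟩
  filter_upwards [h3.eventually (gt_mem_nhds (pow_pos hδ 3)), eventually_ge_atTop 0]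
    with t hY ht
  have hpt : ∀ x ∈ Icc (0:ℝ) 1, u t x ^ 1 ≤ δ + u t x ^ 3 / δ ^ 2 := fun x hx => by
    simpa using le_add_pow_three_div_sq (hu.mem_Icc ht hx).1 hδ
  have hint : IntegrableOn (fun x => δ + u t x ^ 3 / δ ^ 2) (Icc 0 1) :=
    (integrable_const δ).add ((hu.integrableOn_pow ht 3).div_const (δ ^ 2))
  calc spatialMoment u 1 t ≤ ∫ x in Icc (0:ℝ) 1, (δ + u t x ^ 3 / δ ^ 2) :=
        setIntegral_mono_on (hu.integrableOn_pow ht 1) hint measurableSet_Icc hpt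
    _ = δ + spatialMoment u 3 t / δ ^ 2 := by
        rw [integral_add (integrable_const δ) ((hu.integrableOn_pow ht 3).div_const (δ ^ 2)),
          integral_div, spatialMoment]
        simp
    _ < δ + δ := by
        gcongr
        rw [div_lt_iff₀ (by positivity)]
        linarith [show δ ^ 3 = δ * δ ^ 2 by ring]

theorem tendsto_of_tendsto_spatialMoment_one
    (hW01 : ∀ x ∈ Icc (0:ℝ) 1, ∀ y ∈ Icc (0:ℝ) 1, W x y ∈ Icc (0:ℝ) 1)
    (hβ : 0 ≤ β) (hu : IsSISSolution W β u) (h1 : Tendsto (spatialMoment u 1) atTop (𝓝 0))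
    (hx : x ∈ Icc (0:ℝ) 1) :
    Tendsto (fun t => u t x) atTop (𝓝 0) := by
  refine tendsto_zero_of_hasDerivAt_le_neg_mul_add one_pos
    (y' := fun t => sisField W β (u t) x) (g := fun t => β * spatialMoment u 1 t) ?_ ?_
    (by simpa using h1.const_mul β)
  · filter_upwards [eventually_ge_atTop 0] with t ht using (hu.mem_Icc ht hx).1
  · filter_upwards [eventually_ge_atTop 0] with t ht
    have h0 := (hu.mem_Icc ht hx).1
    have hW0 := (hu.graphonOp_mem_Icc hW01 ht hx).1
    have hWE := hu.graphonOp_le_spatialMoment_one hW01 ht hx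
    refine ⟨hu.hasDerivAt ht hx, ?_⟩
    unfold sisField
    nlinarith [mul_nonneg (mul_nonneg hβ h0) hW0, mul_le_mul_of_nonneg_left hWE hβ]

end IsSISSolution

theorem stmt4_general (W : ℝ → ℝ → ℝ) (β : ℝ)
    (hWmeas : Measurable (fun p : ℝ × ℝ => W p.1 p.2))
    (hW01 : ∀ x ∈ Icc (0:ℝ) 1, ∀ y ∈ Icc (0:ℝ) 1, W x y ∈ Icc (0:ℝ) 1)
    (hβ : 0 < β)
    (hsub : β * opNorm2 W ≤ 1)
    (u : ℝ → ℝ → ℝ) (hu : IsSISSolution W β u) :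
    ∀ x ∈ Icc (0:ℝ) 1, Tendsto (fun t => u t x) atTop (nhds 0) := fun _ hx =>
  hu.tendsto_of_tendsto_spatialMoment_one hW01 hβ.le
    (hu.tendsto_spatialMoment_one (hu.tendsto_spatialMoment_three hWmeas hW01 hβ.le hsub)) hx

/-- subcritical graphon SIS. If `β ‖𝕎‖_{op,2} ≤ 1` then the epidemic dies
out: every solution tends pointwise to 0. -/
theorem stmt4 (W : ℝ → ℝ → ℝ) (β : ℝ)
    (hWmeas : Measurable (fun p : ℝ × ℝ => W p.1 p.2))
    (hWsymm : ∀ x ∈ Icc (0:ℝ) 1, ∀ y ∈ Icc (0:ℝ) 1, W x y = W y x)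
    (hW01 : ∀ x ∈ Icc (0:ℝ) 1, ∀ y ∈ Icc (0:ℝ) 1, W x y ∈ Icc (0:ℝ) 1)
    (hWconn : IsConnectedKernel W)
    (hβ : 0 < β)
    (hsub : β * opNorm2 W ≤ 1)
    (u : ℝ → ℝ → ℝ) (hu : IsSISSolution W β u) :
    ∀ x ∈ Icc (0:ℝ) 1, Tendsto (fun t => u t x) atTop (nhds 0) :=
  stmt4_general W β hWmeas hW01 hβ hsub u hu
end

section
/- Fix λ > 0. For each N > λ, consider the Erdős–Rényi graph G(N, λ/N): independent Bernoulli(λ/N) edge indicators a_{ij} for 1 ≤ i < j ≤ N, symmetrized, with degrees d^N(i) = ∑_{j} a_{ij}, and define the random step function ξ^N(x) = ∑_{i=1}^N 1{d^N(i) = 0} · 1_{I_i^N}(x) on [0,1]. Then sup_{0 ≤ a ≤ b ≤ 1} | ∫_a^b ( ξ^N(x) − e^{−λ} ) dx | → 0 in probability as N → ∞. -/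
/-!
A vertex of `G(N, λ/N)` is isolated with probability `q_N = (1 - λ/N)^(N-1) → e^{-λ}`, and two
distinct vertices, which share exactly one potential edge, are both isolated with probability
`(1 - λ/N)^(2N-3)`. So the isolation indicators have pairwise covariance at most `λ/N`, the number
`S_k` of isolated vertices among `1, …, k ≤ N` has variance at most `N(1 + λ)`, and by Chebyshev
`|S_k - k q_N| ≥ εN/8` has probability `O(1/N)`.

Since `ξ^N` is constant on the cells, `∫_0^{k/N} ξ^N = S_k / N`, and `t ↦ ∫_0^t (ξ^N - e^{-λ})` is
1-Lipschitz. Hence a large interval integral forces a large value at one of the `M + 1` points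
`⌊jN/M⌋/N`, `j ≤ M`, where `M ≈ 8/ε` does not depend on `N`; a union bound over them gives
probability `O(M/N) → 0`.
-/

open MeasureTheory Set Filter

/-- The index `k ∈ {1,…,N}` of the cell `I_k^N = [(k−1)/N, k/N)` (last cell closed)
containing `x ∈ [0,1]`. -/
noncomputable def cellIdx (N : ℕ) (x : ℝ) : ℕ :=
  min N (⌊x * N⌋.toNat + 1)

/-- The degree of vertex `i` in the graph on vertices `{1,…,N}` with edge
indicators `a`. -/
def degree (N : ℕ) (a : ℕ → ℕ → Bool) (i : ℕ) : ℕ :=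
  ∑ j ∈ Finset.Icc 1 N, if a i j = true then 1 else 0

open ProbabilityTheory
open scoped ENNReal

lemma cellIdx_eq {N i : ℕ} (hi : 1 ≤ i) (hiN : i ≤ N) {x : ℝ}
    (hx : x ∈ Ico (((i : ℝ) - 1) / N) (i / N)) : cellIdx N x = i := by
  have hN : (0 : ℝ) < N := Nat.cast_pos.mpr (by omega)
  obtain ⟨hlo, hhi⟩ := hx
  rw [div_le_iff₀ hN] at hlo
  rw [lt_div_iff₀ hN] at hhi
  have hfloor : ⌊x * N⌋ = (i : ℤ) - 1 := by
    rw [Int.floor_eq_iff]; push_cast; constructor <;> linarith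
  rw [cellIdx, hfloor]
  omega

lemma measurable_cellIdx (N : ℕ) : Measurable (cellIdx N) :=
  (measurable_from_top (f := fun z : ℤ => min N (z.toNat + 1))).comp
    (measurable_id.mul_const _).floor

lemma intervalIntegrable_comp_cellIdx (f : ℕ → ℝ) (N : ℕ) (u v : ℝ) :
    IntervalIntegrable (fun x => f (cellIdx N x)) volume u v := by
  have hbound : ∀ x, ‖f (cellIdx N x)‖ ≤ ∑ i ∈ Finset.range (N + 1), ‖f i‖ := fun x =>
    Finset.single_le_sum (f := fun i => ‖f i‖) (fun _ _ => norm_nonneg _)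
      (Finset.mem_range_succ_iff.mpr (min_le_left _ _))
  exact (intervalIntegrable_const (c := ∑ i ∈ Finset.range (N + 1), ‖f i‖)).mono_fun
    (measurable_from_top.comp (measurable_cellIdx N)).aestronglyMeasurable
    (ae_of_all _ fun x => (hbound x).trans (le_abs_self _))

lemma integral_cell_comp_cellIdx (f : ℕ → ℝ) {N i : ℕ} (hi : 1 ≤ i) (hiN : i ≤ N) :
    ∫ x in ((i : ℝ) - 1) / N..i / N, f (cellIdx N x) = f i / N := by
  have hle : ((i : ℝ) - 1) / N ≤ i / N := by gcongr; linarith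
  have hcongr : ∀ᵐ x, x ∈ Set.uIoc (((i : ℝ) - 1) / N) (i / N) → f (cellIdx N x) = f i := by
    filter_upwards [measure_singleton (i / N : ℝ) |> compl_mem_ae_iff.mpr] with x hx hxI
    rw [uIoc_of_le hle] at hxI
    rw [cellIdx_eq hi hiN ⟨hxI.1.le, hxI.2.lt_of_ne hx⟩]
  rw [intervalIntegral.integral_congr_ae hcongr, intervalIntegral.integral_const, smul_eq_mul]
  ring

lemma integral_comp_cellIdx (f : ℕ → ℝ) {N k : ℕ} (hk : k ≤ N) :
    ∫ x in (0 : ℝ)..k / N, f (cellIdx N x) = (∑ i ∈ Finset.Icc 1 k, f i) / N := by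
  have hsum := intervalIntegral.sum_integral_adjacent_intervals (a := fun i : ℕ => (i : ℝ) / N)
    (n := k) fun _ _ => intervalIntegrable_comp_cellIdx f N _ _
  simp only [Nat.cast_zero, zero_div] at hsum
  have hIcc : ∑ i ∈ Finset.Icc 1 k, f i = ∑ i ∈ Finset.range k, f (i + 1) := by
    rw [← Finset.Ico_add_one_right_eq_Icc, Finset.sum_Ico_eq_sum_range]
    simp [add_comm]
  rw [← hsum, hIcc, Finset.sum_div]
  refine Finset.sum_congr rfl fun i hi => ?_
  have := integral_cell_comp_cellIdx f (i := i + 1) (by omega)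
    ((Finset.mem_range.mp hi).trans_le hk)
  push_cast at this ⊢
  rwa [add_sub_cancel_right] at this

lemma exists_grid_near {t : ℝ} (ht : t ∈ Icc (0 : ℝ) 1) {M N : ℕ} (hM : 0 < M) (hN : 0 < N) :
    ∃ j ≤ M, |t - ((j * N / M : ℕ) : ℝ) / N| ≤ 1 / M + 1 / N := by
  have hMr : (0 : ℝ) < M := Nat.cast_pos.mpr hM
  have hNr : (0 : ℝ) < N := Nat.cast_pos.mpr hN
  set j := ⌊t * M⌋₊
  set k := j * N / M
  have hjM : j ≤ M := Nat.floor_le_of_le (by nlinarith [ht.2])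
  have hjt : (j : ℝ) / M ≤ t := by rw [div_le_iff₀ hMr]; exact Nat.floor_le (by nlinarith [ht.1])
  have htj : t < (j + 1 : ℝ) / M := by rw [lt_div_iff₀ hMr]; exact Nat.lt_floor_add_one _
  have hkj : (k : ℝ) * M ≤ j * N := by exact_mod_cast Nat.div_mul_le_self _ _
  have hjk : (j : ℝ) * N < (k + 1) * M := by
    rw [mul_comm _ (M : ℝ)]; exact_mod_cast Nat.lt_mul_div_succ (j * N) hM
  have hk_le : (k : ℝ) / N ≤ j / M := by rw [div_le_div_iff₀ hNr hMr]; linarith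
  have hj_lt : (j : ℝ) / M < k / N + 1 / N := by
    rw [← add_div, div_lt_div_iff₀ hMr hNr]; linarith
  refine ⟨j, hjM, abs_le.mpr ⟨?_, ?_⟩⟩
  · have : (0 : ℝ) ≤ 1 / M + 1 / N := by positivity
    linarith
  · rw [add_div] at htj
    linarith

lemma exists_grid_lt_abs_integral {g : ℝ → ℝ} (hg : ∀ u v, IntervalIntegrable g volume u v)
    (hg1 : ∀ x, |g x| ≤ 1) {M N : ℕ} (hM : 0 < M) (hN : 0 < N) {ε s t : ℝ}
    (hs : s ∈ Icc (0 : ℝ) 1) (ht : t ∈ Icc (0 : ℝ) 1) (hε : ε < |∫ x in s..t, g x|) :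
    ∃ j ≤ M, ε / 2 - (1 / M + 1 / N) < |∫ x in (0 : ℝ)..((j * N / M : ℕ) : ℝ) / N, g x| := by
  have hlip : ∀ u v, |∫ x in u..v, g x| ≤ |v - u| := fun u v => by
    simpa using intervalIntegral.norm_integral_le_of_norm_le_const (C := 1) (f := g)
      fun x _ => (Real.norm_eq_abs _).trans_le (hg1 x)
  have hsub : ∀ u v, ∫ x in u..v, g x = (∫ x in (0 : ℝ)..v, g x) - ∫ x in (0 : ℝ)..u, g x :=
    fun u v => (intervalIntegral.integral_interval_sub_left (hg 0 v) (hg 0 u)).symm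
  obtain ⟨u, hu, hFu⟩ : ∃ u ∈ Icc (0 : ℝ) 1, ε / 2 < |∫ x in (0 : ℝ)..u, g x| := by
    by_contra! h
    rw [hsub] at hε
    linarith [abs_sub (∫ x in (0 : ℝ)..t, g x) (∫ x in (0 : ℝ)..s, g x), h s hs, h t ht]
  obtain ⟨j, hjM, hj⟩ := exists_grid_near hu hM hN
  refine ⟨j, hjM, ?_⟩
  have := hlip (((j * N / M : ℕ) : ℝ) / N) u
  rw [hsub] at this
  linarith [abs_sub_abs_le_abs_sub (∫ x in (0 : ℝ)..u, g x)
    (∫ x in (0 : ℝ)..((j * N / M : ℕ) : ℝ) / N, g x)]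

lemma exists_grid_lt_abs_sum_sub {f : ℕ → ℝ} (hf : ∀ i, f i ∈ Icc (0 : ℝ) 1) {c : ℝ}
    (hc : c ∈ Icc (0 : ℝ) 1) {M N : ℕ} (hM : 0 < M) (hN : 0 < N) {ε s t : ℝ}
    (hs : s ∈ Icc (0 : ℝ) 1) (ht : t ∈ Icc (0 : ℝ) 1)
    (hε : ε < |∫ x in s..t, (f (cellIdx N x) - c)|) (b : ℝ) :
    ∃ j ≤ M, (ε / 2 - (1 / M + 1 / N) - |c - b|) * N <
      |∑ i ∈ Finset.Icc 1 (j * N / M), f i - (j * N / M : ℕ) * b| := by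
  have hNr : (0 : ℝ) < N := Nat.cast_pos.mpr hN
  have hg : ∀ u v, IntervalIntegrable (fun x => f (cellIdx N x) - c) volume u v :=
    fun u v => (intervalIntegrable_comp_cellIdx f N u v).sub intervalIntegrable_const
  have hg1 : ∀ x, |f (cellIdx N x) - c| ≤ 1 := fun x => by
    have := hf (cellIdx N x)
    rw [abs_le]; constructor <;> linarith [hc.1, hc.2, this.1, this.2]
  obtain ⟨j, hjM, hj⟩ := exists_grid_lt_abs_integral hg hg1 hM hN hs ht hε
  refine ⟨j, hjM, ?_⟩
  set k := j * N / M
  have hkN : k ≤ N := Nat.div_le_of_le_mul (Nat.mul_le_mul_right N hjM)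
  rw [intervalIntegral.integral_sub (intervalIntegrable_comp_cellIdx f N _ _)
    intervalIntegrable_const, integral_comp_cellIdx f hkN, intervalIntegral.integral_const,
    smul_eq_mul, sub_zero] at hj
  have hsplit : ∑ i ∈ Finset.Icc 1 k, f i - k * b
      = N * ((∑ i ∈ Finset.Icc 1 k, f i) / N - k / N * c) + k * (c - b) := by
    field_simp; ring
  have hkcb : |k * (c - b)| ≤ N * |c - b| := by
    rw [abs_mul, Nat.abs_cast]; gcongr
  rw [hsplit]
  calc (ε / 2 - (1 / M + 1 / N) - |c - b|) * N
      < N * |(∑ i ∈ Finset.Icc 1 k, f i) / N - k / N * c| - N * |c - b| := by nlinarith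
    _ ≤ _ := by
      have := abs_sub_abs_le_abs_sub (N * ((∑ i ∈ Finset.Icc 1 k, f i) / N - k / N * c))
        (-(k * (c - b)))
      rw [abs_mul, abs_of_pos hNr, abs_neg, sub_neg_eq_add] at this
      linarith

abbrev Edge (N : ℕ) := {p : ℕ × ℕ // 1 ≤ p.1 ∧ p.1 < p.2 ∧ p.2 ≤ N}

def incidentEdges (N i : ℕ) : Finset (Edge N) :=
  (((Finset.Icc 1 N).erase i).image fun j => (min i j, max i j)).subtype _

lemma mem_incidentEdges {N i : ℕ} {e : Edge N} :
    e ∈ incidentEdges N i ↔ e.1.1 = i ∨ e.1.2 = i := by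
  obtain ⟨⟨u, v⟩, he⟩ := e
  simp only [incidentEdges, Finset.mem_subtype, Finset.mem_image, Finset.mem_erase,
    Finset.mem_Icc, Prod.mk.injEq]
  constructor
  · rintro ⟨j, -, hu, hv⟩
    omega
  · rintro (rfl | rfl)
    · exact ⟨v, by omega⟩
    · exact ⟨u, by omega⟩

lemma card_incidentEdges {N i : ℕ} (hi : 1 ≤ i) (hiN : i ≤ N) :
    (incidentEdges N i).card = N - 1 := by
  rw [incidentEdges, Finset.card_subtype, Finset.filter_true_of_mem, Finset.card_image_of_injOn,
    Finset.card_erase_of_mem (by simp; omega), Nat.card_Icc, Nat.add_sub_cancel]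
  · intro j₁ h₁ j₂ h₂ h
    simp only [Finset.coe_erase, Finset.coe_Icc, Set.mem_sdiff, Set.mem_Icc,
      Set.mem_singleton_iff, Prod.mk.injEq] at h₁ h₂ h
    omega
  · simp only [Finset.mem_image, Finset.mem_erase, Finset.mem_Icc]
    rintro _ ⟨j, hj, rfl⟩
    omega

lemma incidentEdges_inter {N i j : ℕ} (hij : i < j) (hi : 1 ≤ i) (hjN : j ≤ N) :
    incidentEdges N i ∩ incidentEdges N j = {⟨(i, j), hi, hij, hjN⟩} := by
  ext ⟨⟨u, v⟩, he⟩
  simp only [Finset.mem_inter, mem_incidentEdges, Finset.mem_singleton, Subtype.mk.injEq,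
    Prod.mk.injEq]
  omega

lemma degree_eq_zero_iff {N : ℕ} {a : ℕ → ℕ → Bool} (hsymm : ∀ i j, a i j = a j i)
    (hdiag : ∀ i, a i i = false) {i : ℕ} (hi : 1 ≤ i) (hiN : i ≤ N) :
    degree N a i = 0 ↔ ∀ e ∈ incidentEdges N i, a e.1.1 e.1.2 = false := by
  have hdeg : degree N a i = 0 ↔ ∀ j ∈ Finset.Icc 1 N, a i j = false := by
    simp [degree]
  rw [hdeg]
  constructor
  · rintro h ⟨⟨u, v⟩, he⟩ hmem
    rcases mem_incidentEdges.mp hmem with rfl | rfl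
    · exact h v (Finset.mem_Icc.mpr ⟨by omega, he.2.2⟩)
    · exact hsymm u _ ▸ h u (Finset.mem_Icc.mpr ⟨he.1, by omega⟩)
  · intro h j hj
    rw [Finset.mem_Icc] at hj
    rcases lt_trichotomy i j with hij | rfl | hji
    · exact h ⟨(i, j), hi, hij, hj.2⟩ (mem_incidentEdges.mpr (Or.inl rfl))
    · exact hdiag i
    · exact hsymm i j ▸ h ⟨(j, i), hj.1, hji, hiN⟩ (mem_incidentEdges.mpr (Or.inr rfl))

lemma setOf_degree_eq_zero {Ω : Type*} {N : ℕ} {a : Ω → ℕ → ℕ → Bool}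
    (hsymm : ∀ ω i j, a ω i j = a ω j i) (hdiag : ∀ ω i, a ω i i = false)
    {i : ℕ} (hi : 1 ≤ i) (hiN : i ≤ N) :
    {ω | degree N (a ω) i = 0} = ⋂ e ∈ incidentEdges N i, {ω | a ω e.1.1 e.1.2 = false} := by
  ext ω
  simp only [Set.mem_ofPred_eq, Set.mem_iInter]
  exact degree_eq_zero_iff (hsymm ω) (hdiag ω) hi hiN

section Probability

variable {Ω : Type*} [MeasurableSpace Ω] {μ : Measure Ω} [IsProbabilityMeasure μ]

lemma measureReal_biInter_eq_false {ι : Type*} {Y : ι → Ω → Bool} (hY : ∀ e, Measurable (Y e))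
    (hind : iIndepFun Y μ) {p : ℝ} (hp : ∀ e, μ.real {ω | Y e ω = true} = p) (T : Finset ι) :
    μ.real (⋂ e ∈ T, {ω | Y e ω = false}) = (1 - p) ^ T.card := by
  have hfalse : ∀ e, μ.real (Y e ⁻¹' {false}) = 1 - p := fun e => by
    rw [← hp e, ← probReal_compl_eq_one_sub (s := {ω | Y e ω = true})
      (hY e (measurableSet_singleton true))]
    congr 1; ext; simp
  have hprod := hind.measure_inter_preimage_eq_mul T (sets := fun _ => {false})
    (fun _ _ => measurableSet_singleton _)
  simp only [measureReal_def] at hfalse ⊢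
  rw [show (⋂ e ∈ T, {ω | Y e ω = false}) = ⋂ e ∈ T, Y e ⁻¹' {false} from rfl, hprod,
    ENNReal.toReal_prod, Finset.prod_congr rfl fun e _ => hfalse e, Finset.prod_const]

lemma memLp_indicator_one {A : Set Ω} (hA : MeasurableSet A) (p : ℝ≥0∞) :
    MemLp (A.indicator (1 : Ω → ℝ)) p μ :=
  memLp_indicator_const p hA (1 : ℝ) (Or.inr (measure_ne_top _ _))

lemma covariance_indicator_one {A B : Set Ω} (hA : MeasurableSet A) (hB : MeasurableSet B) :
    cov[A.indicator 1, B.indicator 1; μ] = μ.real (A ∩ B) - μ.real A * μ.real B := by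
  rw [covariance_eq_sub (memLp_indicator_one hA 2) (memLp_indicator_one hB 2),
    ← Set.inter_indicator_one,
    integral_indicator_one (hA.inter hB), integral_indicator_one hA, integral_indicator_one hB]

lemma variance_sum_indicator_one {ι : Type*} {A : ι → Set Ω} (hA : ∀ i, MeasurableSet (A i))
    (s : Finset ι) {q r : ℝ} (hq : ∀ i ∈ s, μ.real (A i) = q)
    (hr : ∀ i ∈ s, ∀ j ∈ s, i ≠ j → μ.real (A i ∩ A j) = r) :
    Var[∑ i ∈ s, (A i).indicator 1; μ]
      = s.card * (q - q ^ 2) + ((s.card : ℝ) ^ 2 - s.card) * (r - q ^ 2) := by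
  classical
  rw [variance_sum' fun i _ => memLp_indicator_one (hA i) 2]
  have hcov : ∀ i ∈ s, ∀ j ∈ s, cov[(A i).indicator 1, (A j).indicator 1; μ]
      = if i = j then q - q ^ 2 else r - q ^ 2 := by
    intro i hi j hj
    rw [covariance_indicator_one (hA i) (hA j)]
    split_ifs with hij
    · subst hij; rw [Set.inter_self, hq i hi]; ring
    · rw [hr i hi j hj hij, hq i hi, hq j hj]; ring
  have hrow : ∀ i ∈ s, ∑ j ∈ s, (if i = j then q - q ^ 2 else r - q ^ 2)
      = s.card * (r - q ^ 2) + (q - r) := by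
    intro i hi
    rw [Finset.sum_congr rfl fun j _ => (show (if i = j then q - q ^ 2 else r - q ^ 2)
        = (r - q ^ 2) + if i = j then q - r else 0 by split_ifs <;> ring),
      Finset.sum_add_distrib, Finset.sum_const, Finset.sum_ite_eq, if_pos hi, nsmul_eq_mul]
  rw [Finset.sum_congr rfl fun i hi => (Finset.sum_congr rfl fun j hj => hcov i hi j hj).trans
    (hrow i hi), Finset.sum_const, nsmul_eq_mul]
  ring

end Probability

section ErdosRenyi

variable {Ω : Type*} [MeasurableSpace Ω] {μ : Measure Ω} [IsProbabilityMeasure μ]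
  {N : ℕ} {a : Ω → ℕ → ℕ → Bool} {p : ℝ}

lemma measurableSet_degree_eq_zero (hmeas : ∀ i j, Measurable fun ω => a ω i j) (i : ℕ) :
    MeasurableSet {ω | degree N (a ω) i = 0} := by
  have : Measurable fun ω => degree N (a ω) i :=
    Finset.measurable_sum _ fun j _ =>
      Measurable.ite (hmeas i j (measurableSet_singleton true)) measurable_const measurable_const
  exact this (measurableSet_singleton 0)

lemma measureReal_degree_eq_zero (hmeas : ∀ i j, Measurable fun ω => a ω i j)
    (hsymm : ∀ ω i j, a ω i j = a ω j i) (hdiag : ∀ ω i, a ω i i = false)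
    (hindep : iIndepFun (fun (e : Edge N) ω => a ω e.1.1 e.1.2) μ)
    (hp : ∀ e : Edge N, μ.real {ω | a ω e.1.1 e.1.2 = true} = p)
    {i : ℕ} (hi : 1 ≤ i) (hiN : i ≤ N) :
    μ.real {ω | degree N (a ω) i = 0} = (1 - p) ^ (N - 1) := by
  rw [setOf_degree_eq_zero hsymm hdiag hi hiN,
    measureReal_biInter_eq_false (fun e => hmeas _ _) hindep hp, card_incidentEdges hi hiN]

lemma measureReal_degree_eq_zero_inter (hmeas : ∀ i j, Measurable fun ω => a ω i j)
    (hsymm : ∀ ω i j, a ω i j = a ω j i) (hdiag : ∀ ω i, a ω i i = false)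
    (hindep : iIndepFun (fun (e : Edge N) ω => a ω e.1.1 e.1.2) μ)
    (hp : ∀ e : Edge N, μ.real {ω | a ω e.1.1 e.1.2 = true} = p)
    {i j : ℕ} (hij : i < j) (hi : 1 ≤ i) (hjN : j ≤ N) :
    μ.real ({ω | degree N (a ω) i = 0} ∩ {ω | degree N (a ω) j = 0}) = (1 - p) ^ (2 * N - 3) := by
  have hcard : (incidentEdges N i ∪ incidentEdges N j).card = 2 * N - 3 := by
    have := Finset.card_union_add_card_inter (incidentEdges N i) (incidentEdges N j)
    rw [incidentEdges_inter hij hi hjN, Finset.card_singleton, card_incidentEdges hi (by omega),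
      card_incidentEdges (by omega) hjN] at this
    omega
  rw [setOf_degree_eq_zero hsymm hdiag hi (by omega),
    setOf_degree_eq_zero hsymm hdiag (by omega) hjN,
    ← Finset.set_biInter_inter, measureReal_biInter_eq_false (fun e => hmeas _ _) hindep hp, hcard]

noncomputable def isolatedCount (N k : ℕ) (a : Ω → ℕ → ℕ → Bool) : Ω → ℝ :=
  ∑ i ∈ Finset.Icc 1 k, {ω | degree N (a ω) i = 0}.indicator 1

lemma integral_isolatedCount (hmeas : ∀ i j, Measurable fun ω => a ω i j)
    (hsymm : ∀ ω i j, a ω i j = a ω j i) (hdiag : ∀ ω i, a ω i i = false)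
    (hindep : iIndepFun (fun (e : Edge N) ω => a ω e.1.1 e.1.2) μ)
    (hp : ∀ e : Edge N, μ.real {ω | a ω e.1.1 e.1.2 = true} = p) {k : ℕ} (hk : k ≤ N) :
    μ[isolatedCount N k a] = k * (1 - p) ^ (N - 1) := by
  simp only [isolatedCount, Finset.sum_apply]
  rw [integral_finsetSum _ fun i _ =>
    (memLp_indicator_one (measurableSet_degree_eq_zero hmeas i) 1).integrable le_rfl,
    Finset.sum_congr rfl fun i hi => by
    rw [integral_indicator_one (measurableSet_degree_eq_zero hmeas i),
      measureReal_degree_eq_zero hmeas hsymm hdiag hindep hp (Finset.mem_Icc.mp hi).1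
        ((Finset.mem_Icc.mp hi).2.trans hk)]]
  simp

-- the covariance of the isolation indicators of two distinct vertices
lemma one_sub_pow_sub_sq_le {p : ℝ} (hp0 : 0 ≤ p) (hp1 : p ≤ 1) (N : ℕ) :
    (1 - p) ^ (2 * N - 3) - ((1 - p) ^ (N - 1)) ^ 2 ≤ p := by
  rcases Nat.lt_or_ge N 2 with hN | hN
  · rw [show 2 * N - 3 = 0 by omega, show N - 1 = 0 by omega]; simpa using hp0
  · have h : ((1 - p) ^ (N - 1)) ^ 2 = (1 - p) ^ (2 * N - 3) * (1 - p) := by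
      rw [← pow_mul, ← pow_succ]; congr 1; omega
    have : (1 - p) ^ (2 * N - 3) ≤ 1 := pow_le_one₀ (by linarith) (by linarith)
    nlinarith

lemma variance_isolatedCount_le (hmeas : ∀ i j, Measurable fun ω => a ω i j)
    (hsymm : ∀ ω i j, a ω i j = a ω j i) (hdiag : ∀ ω i, a ω i i = false)
    (hindep : iIndepFun (fun (e : Edge N) ω => a ω e.1.1 e.1.2) μ)
    (hp : ∀ e : Edge N, μ.real {ω | a ω e.1.1 e.1.2 = true} = p) (hp0 : 0 ≤ p) (hp1 : p ≤ 1)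
    {k : ℕ} (hk : k ≤ N) :
    Var[isolatedCount N k a; μ] ≤ N * (1 + N * p) := by
  set q := (1 - p) ^ (N - 1)
  rw [isolatedCount, variance_sum_indicator_one (measurableSet_degree_eq_zero hmeas) _
    (q := q) (r := (1 - p) ^ (2 * N - 3))]
  · have hq0 : 0 ≤ q := pow_nonneg (by linarith) _
    have hq1 : q ≤ 1 := pow_le_one₀ (by linarith) (by linarith)
    have hkN : (k : ℝ) ≤ N := by exact_mod_cast hk
    have hkk : (k : ℝ) ≤ k ^ 2 := by exact_mod_cast Nat.le_self_pow two_ne_zero k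
    have hr := one_sub_pow_sub_sq_le hp0 hp1 N
    have hvar_le : (k : ℝ) * (q - q ^ 2) ≤ N := by
      nlinarith [mul_le_mul_of_nonneg_left (show q - q ^ 2 ≤ 1 by nlinarith) (Nat.cast_nonneg k)]
    have hcov_le : ((k : ℝ) ^ 2 - k) * ((1 - p) ^ (2 * N - 3) - q ^ 2) ≤ N ^ 2 * p := by
      calc ((k : ℝ) ^ 2 - k) * ((1 - p) ^ (2 * N - 3) - q ^ 2) ≤ ((k : ℝ) ^ 2 - k) * p :=
            mul_le_mul_of_nonneg_left hr (by linarith)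
        _ ≤ N ^ 2 * p := by gcongr; nlinarith
    rw [Nat.card_Icc, Nat.add_sub_cancel]
    nlinarith
  · intro i hi
    exact measureReal_degree_eq_zero hmeas hsymm hdiag hindep hp (Finset.mem_Icc.mp hi).1
      ((Finset.mem_Icc.mp hi).2.trans hk)
  · intro i hi j hj hij
    simp only [Finset.mem_Icc] at hi hj
    rcases hij.lt_or_gt with hij | hji
    · exact measureReal_degree_eq_zero_inter hmeas hsymm hdiag hindep hp hij hi.1 (by omega)
    · rw [Set.inter_comm]
      exact measureReal_degree_eq_zero_inter hmeas hsymm hdiag hindep hp hji hj.1 (by omega)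

lemma measure_le_abs_isolatedCount_sub_le (hmeas : ∀ i j, Measurable fun ω => a ω i j)
    (hsymm : ∀ ω i j, a ω i j = a ω j i) (hdiag : ∀ ω i, a ω i i = false)
    (hindep : iIndepFun (fun (e : Edge N) ω => a ω e.1.1 e.1.2) μ)
    (hp : ∀ e : Edge N, μ.real {ω | a ω e.1.1 e.1.2 = true} = p) (hp0 : 0 ≤ p) (hp1 : p ≤ 1)
    {k : ℕ} (hk : k ≤ N) {δ : ℝ} (hδ : 0 < δ) :
    μ {ω | δ ≤ |isolatedCount N k a ω - k * (1 - p) ^ (N - 1)|}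
      ≤ ENNReal.ofReal (N * (1 + N * p) / δ ^ 2) := by
  have hL : MemLp (isolatedCount N k a) 2 μ :=
    memLp_finsetSum' _ fun i _ => memLp_indicator_one (measurableSet_degree_eq_zero hmeas i) 2
  rw [← integral_isolatedCount hmeas hsymm hdiag hindep hp hk]
  refine (meas_ge_le_variance_div_sq hL hδ).trans (ENNReal.ofReal_le_ofReal ?_)
  gcongr
  exact variance_isolatedCount_le hmeas hsymm hdiag hindep hp hp0 hp1 hk

lemma measure_exists_lt_abs_integral_le (hmeas : ∀ i j, Measurable fun ω => a ω i j)
    (hsymm : ∀ ω i j, a ω i j = a ω j i) (hdiag : ∀ ω i, a ω i i = false)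
    (hindep : iIndepFun (fun (e : Edge N) ω => a ω e.1.1 e.1.2) μ)
    (hp : ∀ e : Edge N, μ.real {ω | a ω e.1.1 e.1.2 = true} = p) (hp0 : 0 ≤ p) (hp1 : p ≤ 1)
    {M : ℕ} (hM : 0 < M) (hN : 0 < N) {ε c : ℝ} (hc : c ∈ Icc (0 : ℝ) 1)
    (hMε : 1 / (M : ℝ) ≤ ε / 8) (hNε : 1 / (N : ℝ) ≤ ε / 8)
    (hcq : |c - (1 - p) ^ (N - 1)| ≤ ε / 8) :
    μ {ω | ∃ s t : ℝ, 0 ≤ s ∧ s ≤ t ∧ t ≤ 1 ∧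
        ε < |∫ x in s..t, ((if degree N (a ω) (cellIdx N x) = 0 then (1 : ℝ) else 0) - c)|}
      ≤ ENNReal.ofReal ((M + 1) * 64 * (1 + N * p) / (ε ^ 2 * N)) := by
  have hNr : (0 : ℝ) < N := Nat.cast_pos.mpr hN
  have hε : 0 < ε := by linarith [show (0 : ℝ) < 1 / N by positivity]
  set B : ℕ → Set Ω := fun j => {ω | ε / 8 * N ≤
    |isolatedCount N (j * N / M) a ω - (j * N / M : ℕ) * (1 - p) ^ (N - 1)|}
  have hsubset : {ω | ∃ s t : ℝ, 0 ≤ s ∧ s ≤ t ∧ t ≤ 1 ∧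
      ε < |∫ x in s..t, ((if degree N (a ω) (cellIdx N x) = 0 then (1 : ℝ) else 0) - c)|}
      ⊆ ⋃ j ∈ Finset.range (M + 1), B j := by
    rintro ω ⟨s, t, hs, hst, ht, hω⟩
    obtain ⟨j, hjM, hj⟩ := exists_grid_lt_abs_sum_sub
      (f := fun i => if degree N (a ω) i = 0 then 1 else 0) (fun i => by split_ifs <;> simp)
      hc hM hN ⟨hs, hst.trans ht⟩ ⟨hs.trans hst, ht⟩ hω ((1 - p) ^ (N - 1))
    refine Set.mem_biUnion (Finset.mem_range_succ_iff.mpr hjM) ?_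
    simp only [B, Set.mem_ofPred_eq, isolatedCount, Finset.sum_apply, Set.indicator_apply,
      Pi.one_apply]
    -- `ε / 2 - (1 / M + 1 / N) - |c - q_N| ≥ ε / 8`
    nlinarith
  have hB : ∀ j ≤ M, μ (B j) ≤ ENNReal.ofReal (N * (1 + N * p) / (ε / 8 * N) ^ 2) := fun j hj =>
    measure_le_abs_isolatedCount_sub_le hmeas hsymm hdiag hindep hp hp0 hp1
      (Nat.div_le_of_le_mul (Nat.mul_le_mul_right N hj)) (by positivity)
  calc _ ≤ ∑ j ∈ Finset.range (M + 1), μ (B j) := (measure_mono hsubset).trans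
        (measure_biUnion_finset_le _ _)
    _ ≤ ∑ j ∈ Finset.range (M + 1), ENNReal.ofReal (N * (1 + N * p) / (ε / 8 * N) ^ 2) :=
        Finset.sum_le_sum fun j hj => hB j (Finset.mem_range_succ_iff.mp hj)
    _ = _ := by
        rw [Finset.sum_const, Finset.card_range, nsmul_eq_mul, ← ENNReal.ofReal_natCast,
          ← ENNReal.ofReal_mul (by positivity)]
        congr 1
        field_simp
        push_cast
        ring

end ErdosRenyi

lemma tendsto_one_sub_div_pow_sub_one (x : ℝ) :
    Tendsto (fun n : ℕ => (1 - x / n) ^ (n - 1)) atTop (nhds (Real.exp (-x))) := by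
  have hpow : Tendsto (fun n : ℕ => (1 - x / n) ^ n) atTop (nhds (Real.exp (-x))) := by
    simpa [neg_div, ← sub_eq_add_neg] using Real.tendsto_one_add_div_pow_exp (-x)
  have hbase : Tendsto (fun n : ℕ => 1 - x / n) atTop (nhds 1) := by
    simpa using tendsto_const_nhds.sub (tendsto_const_div_atTop_nhds_zero_nat x)
  have hquot := hpow.mul (hbase.inv₀ one_ne_zero)
  rw [inv_one, mul_one] at hquot
  refine hquot.congr' ?_
  filter_upwards [hbase.eventually_ne one_ne_zero, eventually_ge_atTop 1] with n hne hn
  rw [pow_sub₀ _ hne hn, pow_one]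

/-- in the sparse Erdős–Rényi graph `G(N, λ/N)`, the step function
indicating vertices of degree 0 converges in the interval norm, in probability, to the
constant `e^{−λ}`. -/
theorem stmt13 (lam : ℝ) (hlam : 0 < lam)
    (Ω : ℕ → Type) (mΩ : ∀ N, MeasurableSpace (Ω N))
    (μ : ∀ N, Measure (Ω N)) (hμ : ∀ N, IsProbabilityMeasure (μ N))
    (a : ∀ N : ℕ, Ω N → ℕ → ℕ → Bool)
    (ha_meas : ∀ N i j, Measurable (fun ω => a N ω i j))
    (ha_symm : ∀ N ω i j, a N ω i j = a N ω j i)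
    (ha_diag : ∀ N ω i, a N ω i i = false)
    (ha_indep : ∀ N : ℕ, ProbabilityTheory.iIndepFun
      (fun (p : {p : ℕ × ℕ // 1 ≤ p.1 ∧ p.1 < p.2 ∧ p.2 ≤ N}) (ω : Ω N) =>
        a N ω p.1.1 p.1.2) (μ N))
    (ha_marg : ∀ N : ℕ, ∀ i j : ℕ, lam < N → 1 ≤ i → i < j → j ≤ N →
      μ N {ω | a N ω i j = true} = ENNReal.ofReal (lam / N)) :
    ∀ ε : ℝ, 0 < ε →
      Tendsto (fun N : ℕ =>
        μ N {ω | ∃ p q : ℝ, 0 ≤ p ∧ p ≤ q ∧ q ≤ 1 ∧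
          ε < |∫ x in p..q,
            ((if degree N (a N ω) (cellIdx N x) = 0 then (1:ℝ) else 0)
              - Real.exp (-lam))|}) atTop (nhds 0) := by
  intro ε hε
  obtain ⟨m, hm⟩ := exists_nat_one_div_lt (by positivity : (0 : ℝ) < ε / 8)
  have hMε : 1 / ((m + 1 : ℕ) : ℝ) ≤ ε / 8 := by push_cast; exact hm.le
  have hc : Real.exp (-lam) ∈ Icc (0 : ℝ) 1 :=
    ⟨(Real.exp_pos _).le, Real.exp_le_one_iff.mpr (by linarith)⟩
  refine tendsto_of_tendsto_of_tendsto_of_le_of_le' tendsto_const_nhds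
    (by simpa using ENNReal.tendsto_ofReal (tendsto_const_div_atTop_nhds_zero_nat
      (((m + 1 : ℕ) + 1) * 64 * (1 + lam) / ε ^ 2)))
    (Eventually.of_forall fun _ => zero_le) ?_
  have hq := (tendsto_one_sub_div_pow_sub_one lam).eventually
    (Metric.closedBall_mem_nhds (Real.exp (-lam)) (by positivity : 0 < ε / 8))
  have hN := (tendsto_const_div_atTop_nhds_zero_nat 1).eventually
    (Iic_mem_nhds (by positivity : (0 : ℝ) < ε / 8))
  filter_upwards [eventually_gt_atTop ⌈lam⌉₊, hq, hN] with N hlamN hqN hNε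
  have hlamN : lam < N := Nat.lt_of_ceil_lt hlamN
  have hNr : (0 : ℝ) < N := hlam.trans hlamN
  have hp : ∀ e : Edge N, (μ N).real {ω | a N ω e.1.1 e.1.2 = true} = lam / N := fun e => by
    rw [measureReal_def, ha_marg N _ _ hlamN e.2.1 e.2.2.1 e.2.2.2,
      ENNReal.toReal_ofReal (by positivity)]
  refine (measure_exists_lt_abs_integral_le (ha_meas N) (ha_symm N) (ha_diag N) (ha_indep N) hp
    (by positivity) ((div_le_one hNr).mpr hlamN.le) m.add_one_pos (Nat.cast_pos.mp hNr) hc hMε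
    hNε (by rw [abs_sub_comm]; exact hqN)).trans_eq (congrArg ENNReal.ofReal ?_)
  rw [mul_div_cancel₀ _ hNr.ne', div_div]
  push_cast
  ring
end
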